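/- arXiv:2605.19423 — 3 statements merged into one kernel-verified Lean document; each statement's English description precedes it below -/
import Mathlib

section
/- Let (b,c) be a connected transient graph over (X,m). Then 𝓟 = G𝓖; more precisely, u is a potential if and only if u = Gk for some k ∈ 𝓖, and in that case u ∈ 𝓕, 𝓛u = k and u = G𝓛u, with all involved sums converging absolutely. -/
open Filter MeasureTheory Topology
open scoped ENNReal NNReal

noncomputable section

namespace HG

variable {X : Type*}

open scoped Classical

/-- `f` has finite support (membership in `C_c(X)`). -/
def FinSupp (f : X → ℝ) : Prop := (Function.support f).Finite

/-- Membership in `𝓕`. -/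
def MemF (b : X → X → ℝ) (f : X → ℝ) : Prop :=
  ∀ x : X, Summable fun y => b x y * |f y|

/-- The formal Laplacian `𝓛`. -/
def lap (b : X → X → ℝ) (c m : X → ℝ) (f : X → ℝ) (x : X) : ℝ :=
  (1 / m x) * ∑' y, b x y * (f x - f y) + (c x / m x) * f x

/-- The energy form `𝓠`, valued in `ℝ≥0∞`. -/
def energy (b : X → X → ℝ) (c : X → ℝ) (f : X → ℝ) : ℝ≥0∞ :=
  (1 / 2) * ∑' x, ∑' y, ENNReal.ofReal (b x y * (f x - f y) ^ 2)
    + ∑' x, ENNReal.ofReal (c x * f x ^ 2)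

/-- Membership in `𝓓`, the functions of finite energy. -/
def MemD (b : X → X → ℝ) (c : X → ℝ) (f : X → ℝ) : Prop := energy b c f < ⊤

/-- Membership in `𝓓₀`, the closure of `C_c(X)` w.r.t. `‖f‖_o = (𝓠(f)+f(o)²)^{1/2}`. -/
def MemD0 (b : X → X → ℝ) (c : X → ℝ) (o : X) (f : X → ℝ) : Prop :=
  ∃ φ : ℕ → X → ℝ, (∀ n, FinSupp (φ n)) ∧
    Tendsto (fun n => energy b c (fun x => f x - φ n x)
      + ENNReal.ofReal ((f o - φ n o) ^ 2)) atTop (nhds 0)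

/-- `(b,c)` is a connected graph over `(X,m)`. -/
structure IsGraph (b : X → X → ℝ) (c m : X → ℝ) : Prop where
  symm : ∀ x y, b x y = b y x
  nonneg : ∀ x y, 0 ≤ b x y
  loopless : ∀ x, b x x = 0
  deg_summable : ∀ x, Summable fun y => b x y
  c_nonneg : ∀ x, 0 ≤ c x
  m_pos : ∀ x, 0 < m x
  connected : ∀ x y : X, ∃ (k : ℕ) (p : ℕ → X), p 0 = x ∧ p k = y ∧
    ∀ i < k, 0 < b (p i) (p (i + 1))

/-- `u` is superharmonic: `u ∈ 𝓕` and `𝓛u ≥ 0`. -/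
def Superharmonic (b : X → X → ℝ) (c m : X → ℝ) (u : X → ℝ) : Prop :=
  MemF b u ∧ ∀ x, 0 ≤ lap b c m u x

/-- `u` is subharmonic: `u ∈ 𝓕` and `𝓛u ≤ 0`. -/
def Subharmonic (b : X → X → ℝ) (c m : X → ℝ) (u : X → ℝ) : Prop :=
  MemF b u ∧ ∀ x, lap b c m u x ≤ 0

/-- The Green operator `Gk(x) = ∑_y G(x,y) k(y)`. -/
def Gop (G : X → X → ℝ) (k : X → ℝ) (x : X) : ℝ := ∑' y, G x y * k y

/-- Membership in `𝓖`, the domain of the Green operator. -/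
def MemG (G : X → X → ℝ) (k : X → ℝ) : Prop :=
  ∀ x, Summable fun y => G x y * |k y|

/-- `u` is a potential: `u ∈ 𝓕`, `𝓛u ∈ 𝓖` and `u = G𝓛u`. -/
def IsPotential (b : X → X → ℝ) (c m : X → ℝ) (G : X → X → ℝ) (u : X → ℝ) : Prop :=
  MemF b u ∧ MemG G (lap b c m u) ∧ u = Gop G (lap b c m u)

/-- Membership in `𝓖₂ = {k ∈ 𝓖 : ∑_x m(x)|k(x)| (G|k|)(x) < ∞}`. -/
def MemG2 (m : X → ℝ) (G : X → X → ℝ) (k : X → ℝ) : Prop :=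
  MemG G k ∧ Summable fun x => m x * |k x| * Gop G (fun y => |k y|) x

/-- `G` is the Green function of the (transient) graph `(b,c)` over `(X,m)`:
for every `y`, `G(·,y)` is the unique function in `𝓓₀ ∩ 𝓕` with `𝓛 G(·,y) = 1_y`;
it is strictly positive and symmetric. -/
structure IsGreen (b : X → X → ℝ) (c m : X → ℝ) (o : X) (G : X → X → ℝ) : Prop where
  pos : ∀ x y, 0 < G x y
  symm : ∀ x y, G x y = G y x
  memF : ∀ y, MemF b fun x => G x y
  memD0 : ∀ y, MemD0 b c o fun x => G x y
  lap_eq : ∀ y x, lap b c m (fun z => G z y) x = if x = y then 1 else 0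
  unique : ∀ (y : X) (u : X → ℝ), MemF b u → MemD0 b c o u →
    (∀ x, lap b c m u x = if x = y then 1 else 0) → u = fun x => G x y

/-- `w(φ) = ∑_x m(x) w(x) φ(x)²`. -/
def wsum (m w φ : X → ℝ) : ℝ := ∑' x, m x * w x * φ x ^ 2

/-- `w` is a Hardy type weight: `𝓠(φ) ≥ ∑_x m(x) w(x) φ(x)²` for all `φ ∈ C_c(X)`. -/
def IsHardyType (b : X → X → ℝ) (c m w : X → ℝ) : Prop :=
  ∀ φ : X → ℝ, FinSupp φ → ENNReal.ofReal (wsum m w φ) ≤ energy b c φ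

/-- `w` is a Hardy weight: a non-negative Hardy type weight. -/
def IsHardy (b : X → X → ℝ) (c m w : X → ℝ) : Prop :=
  (∀ x, 0 ≤ w x) ∧ IsHardyType b c m w

/-- A Hardy weight is critical if the only Hardy weight above it is itself. -/
def IsCriticalHardy (b : X → X → ℝ) (c m w : X → ℝ) : Prop :=
  IsHardy b c m w ∧ ∀ w', IsHardy b c m w' → (∀ x, w x ≤ w' x) → w' = w

/-- A Hardy type weight is critical if the only Hardy type weight above it is itself. -/
def IsCriticalHardyType (b : X → X → ℝ) (c m w : X → ℝ) : Prop :=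
  IsHardyType b c m w ∧ ∀ w', IsHardyType b c m w' → (∀ x, w x ≤ w' x) → w' = w

/-- A ground state of `w`: a strictly positive `v ∈ 𝓕` with `𝓛v = wv`. -/
def IsGroundState (b : X → X → ℝ) (c m w v : X → ℝ) : Prop :=
  MemF b v ∧ (∀ x, 0 < v x) ∧ ∀ x, lap b c m v x = w x * v x

/-- A ground state of `w` obtained as pointwise limit of a null sequence. -/
def IsGroundStateSeq (b : X → X → ℝ) (c m w v : X → ℝ) : Prop :=
  IsGroundState b c m w v ∧
  ∃ e : ℕ → X → ℝ, (∀ n, FinSupp (e n)) ∧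
    Tendsto (fun n => (energy b c (e n)).toReal - wsum m w (e n)) atTop (nhds 0) ∧
    ∀ x, Tendsto (fun n => e n x) atTop (nhds (v x))

/-- Membership in `C₀(X)`, functions vanishing at infinity. -/
def MemC0 (f : X → ℝ) : Prop := ∀ ε : ℝ, 0 < ε → {x | ε ≤ |f x|}.Finite

/-! Reading `𝓛 G(·,z) = 1_z` at `x` gives
`∑_y b(x,y) G(y,z) = (deg x + c x) G(x,z) - m(x) 1_z(x) ≤ (deg x + c x) G(x,z)`,
where `deg x = ∑_y b(x,y)`.
Hence for `k ∈ 𝓖` the double series `∑_{y,z} b(x,y) G(y,z) |k(z)|` converges, so `Gk ∈ 𝓕`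
and the two sums in `𝓛(Gk)(x) = ∑_z 𝓛G(·,z)(x) k(z) = k(x)` may be interchanged. -/

section Potentials

variable {b : X → X → ℝ} {c m : X → ℝ} {o : X} {G : X → X → ℝ}

lemma abs_gop_le {k : X → ℝ} (x : X) (hG : ∀ y, 0 ≤ G x y)
    (hk : Summable fun y => G x y * |k y|) :
    |Gop G k x| ≤ Gop G (fun y => |k y|) x := by
  have hnorm : ∀ y, ‖G x y * k y‖ = G x y * |k y| := fun y => by
    rw [Real.norm_eq_abs, abs_mul, abs_of_nonneg (hG y)]
  calc |Gop G k x| = ‖∑' y, G x y * k y‖ := (Real.norm_eq_abs _).symm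
    _ ≤ ∑' y, ‖G x y * k y‖ := norm_tsum_le_tsum_norm (hk.congr fun y => (hnorm y).symm)
    _ = Gop G (fun y => |k y|) x := tsum_congr hnorm

namespace IsGreen

lemma tsum_mul_sub (hg : IsGraph b c m) (hG : IsGreen b c m o G) (x z : X) :
    ∑' y, b x y * (G x z - G y z) = m x * (if x = z then 1 else 0) - c x * G x z := by
  have h := hG.lap_eq z x
  have hm : m x ≠ 0 := (hg.m_pos x).ne'
  rw [lap] at h
  field_simp at h
  linear_combination h

lemma summable_mul (hG : IsGreen b c m o G) (x z : X) :
    Summable fun y => b x y * G y z :=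
  (hG.memF z x).congr fun y => by rw [abs_of_pos (hG.pos y z)]

lemma tsum_mul_le (hg : IsGraph b c m) (hG : IsGreen b c m o G) (x z : X) :
    ∑' y, b x y * G y z ≤ ((∑' y, b x y) + c x) * G x z := by
  have hsplit : ∑' y, b x y * (G x z - G y z)
      = (∑' y, b x y) * G x z - ∑' y, b x y * G y z := by
    rw [← tsum_mul_right, ← ((hg.deg_summable x).mul_right _).tsum_sub (hG.summable_mul x z)]
    exact tsum_congr fun y => by ring
  have hδ : 0 ≤ m x * (if x = z then 1 else 0) :=
    mul_nonneg (hg.m_pos x).le (by split_ifs <;> norm_num)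
  linarith [hG.tsum_mul_sub hg x z]

lemma summable_prod_mul_abs (hg : IsGraph b c m) (hG : IsGreen b c m o G) {k : X → ℝ}
    (hk : MemG G k) (x : X) :
    Summable fun p : X × X => b x p.1 * G p.1 p.2 * |k p.2| := by
  have hnn : 0 ≤ fun p : X × X => b x p.2 * G p.2 p.1 * |k p.1| := fun p =>
    mul_nonneg (mul_nonneg (hg.nonneg _ _) (hG.pos _ _).le) (abs_nonneg _)
  have hrow : ∀ z, Summable fun y => b x y * G y z * |k z| := fun z =>
    (hG.summable_mul x z).mul_right _
  have hcol : Summable fun z => ∑' y, b x y * G y z * |k z| := by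
    refine ((hk x).mul_left ((∑' y, b x y) + c x)).of_nonneg_of_le
      (fun z => tsum_nonneg fun y => hnn (z, y)) fun z => ?_
    rw [tsum_mul_right, ← mul_assoc]
    exact mul_le_mul_of_nonneg_right (hG.tsum_mul_le hg x z) (abs_nonneg _)
  have hswap : Summable fun p : X × X => b x p.2 * G p.2 p.1 * |k p.1| :=
    (summable_prod_of_nonneg hnn).mpr ⟨hrow, hcol⟩
  exact hswap.prod_symm

lemma memF_gop (hg : IsGraph b c m) (hG : IsGreen b c m o G) {k : X → ℝ} (hk : MemG G k) :
    MemF b (Gop G k) := by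
  intro x
  refine (hG.summable_prod_mul_abs hg hk x).prod.of_nonneg_of_le
    (fun y => mul_nonneg (hg.nonneg _ _) (abs_nonneg _)) fun y => ?_
  calc b x y * |Gop G k y| ≤ b x y * Gop G (fun z => |k z|) y :=
        mul_le_mul_of_nonneg_left (abs_gop_le y (fun z => (hG.pos y z).le) (hk y)) (hg.nonneg _ _)
    _ = ∑' z, b x y * G y z * |k z| := by
        rw [Gop, ← tsum_mul_left]
        exact tsum_congr fun z => (mul_assoc _ _ _).symm

lemma summable_uncurry_mul_sub (hg : IsGraph b c m) (hG : IsGreen b c m o G) {k : X → ℝ}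
    (hk : MemG G k) (x : X) :
    Summable (Function.uncurry fun y z => b x y * ((G x z - G y z) * k z)) := by
  have hdom := ((hg.deg_summable x).mul_of_nonneg (hk x) (hg.nonneg x)
    fun z => mul_nonneg (hG.pos _ _).le (abs_nonneg _)).add (hG.summable_prod_mul_abs hg hk x)
  refine Summable.of_abs (hdom.of_nonneg_of_le (fun p => abs_nonneg _) fun p => ?_)
  have hG2 : |G x p.2 - G p.1 p.2| ≤ G x p.2 + G p.1 p.2 := by
    have := hG.pos x p.2; have := hG.pos p.1 p.2
    exact abs_le.2 ⟨by linarith, by linarith⟩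
  calc |b x p.1 * ((G x p.2 - G p.1 p.2) * k p.2)|
      = b x p.1 * (|G x p.2 - G p.1 p.2| * |k p.2|) := by
        rw [abs_mul, abs_mul, abs_of_nonneg (hg.nonneg _ _)]
    _ ≤ b x p.1 * ((G x p.2 + G p.1 p.2) * |k p.2|) :=
        mul_le_mul_of_nonneg_left (mul_le_mul_of_nonneg_right hG2 (abs_nonneg _))
          (hg.nonneg _ _)
    _ = b x p.1 * (G x p.2 * |k p.2|) + b x p.1 * G p.1 p.2 * |k p.2| := by ring

lemma lap_gop (hg : IsGraph b c m) (hG : IsGreen b c m o G) {k : X → ℝ} (hk : MemG G k)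
    (x : X) : lap b c m (Gop G k) x = k x := by
  have hGk : ∀ y, Summable fun z => G y z * k z := fun y =>
    ((hk y).congr fun z => by rw [abs_mul, abs_of_pos (hG.pos y z)]).of_abs
  have hswap := hG.summable_uncurry_mul_sub hg hk x
  have hrow : ∀ y, b x y * (Gop G k x - Gop G k y)
      = ∑' z, b x y * ((G x z - G y z) * k z) := fun y => by
    rw [Gop, Gop, ← (hGk x).tsum_sub (hGk y), ← tsum_mul_left]
    exact tsum_congr fun z => by ring
  have hcol : ∀ z, ∑' y, b x y * ((G x z - G y z) * k z)
      = (if z = x then m x * k x else 0) - c x * (G x z * k z) := fun z => by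
    simp_rw [← mul_assoc, tsum_mul_right, hG.tsum_mul_sub hg x z]
    rcases eq_or_ne z x with rfl | h
    · simp only [↓reduceIte, mul_one]; ring
    · simp [h, Ne.symm h]
  have hsum : ∑' y, b x y * (Gop G k x - Gop G k y) = m x * k x - c x * Gop G k x := by
    rw [tsum_congr hrow, ← hswap.tsum_comm, tsum_congr hcol]
    exact ((hasSum_ite_eq x _).sub ((hGk x).hasSum.mul_left (c x))).tsum_eq
  have hm : m x ≠ 0 := (hg.m_pos x).ne'
  rw [lap, hsum]
  field_simp
  ring

end IsGreen

end Potentials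

theorem stmt2_general {X : Type*} (b : X → X → ℝ) (c m : X → ℝ) (o : X)
    (G : X → X → ℝ) (hg : IsGraph b c m) (hG : IsGreen b c m o G)
    (u : X → ℝ) :
    (IsPotential b c m G u ↔ ∃ k : X → ℝ, MemG G k ∧ u = Gop G k) ∧
    (∀ k : X → ℝ, MemG G k → u = Gop G k →
      MemF b u ∧ (∀ x, lap b c m u x = k x) ∧
      MemG G (lap b c m u) ∧ u = Gop G (lap b c m u)) := by
  have hgreen : ∀ k, MemG G k → u = Gop G k →
      MemF b u ∧ (∀ x, lap b c m u x = k x) ∧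
      MemG G (lap b c m u) ∧ u = Gop G (lap b c m u) := by
    rintro k hk rfl
    have hlap : lap b c m (Gop G k) = k := funext (hG.lap_gop hg hk)
    exact ⟨hG.memF_gop hg hk, hG.lap_gop hg hk, by rw [hlap]; exact hk, by rw [hlap]⟩
  refine ⟨⟨fun ⟨_, hL, hu⟩ => ⟨_, hL, hu⟩, fun ⟨k, hk, hu⟩ => ?_⟩, hgreen⟩
  obtain ⟨hF, -, hL, hu'⟩ := hgreen k hk hu
  exact ⟨hF, hL, hu'⟩

/-- Proposition 2.1. `𝓟 = G𝓖`: `u` is a potential iff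
`u = Gk` for some `k ∈ 𝓖`, and in this case `u ∈ 𝓕`, `𝓛u = k` and `u = G𝓛u`
(all sums converging absolutely). -/
theorem stmt2 {X : Type*} [Countable X] (b : X → X → ℝ) (c m : X → ℝ) (o : X)
    (G : X → X → ℝ) (hg : IsGraph b c m) (hG : IsGreen b c m o G)
    (u : X → ℝ) :
    (IsPotential b c m G u ↔ ∃ k : X → ℝ, MemG G k ∧ u = Gop G k) ∧
    (∀ k : X → ℝ, MemG G k → u = Gop G k →
      MemF b u ∧ (∀ x, lap b c m u x = k x) ∧
      MemG G (lap b c m u) ∧ u = Gop G (lap b c m u)) :=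
  stmt2_general b c m o G hg hG u

end HG
end
end

section
/- Let (b,c) be a connected transient graph over (X,m). If u ∈ C₀(X) ∩ 𝓕 is superharmonic, then u is a potential. -/
open Filter MeasureTheory Topology
open scoped ENNReal NNReal

noncomputable section

namespace HG

variable {X : Type*}

open scoped Classical

/-!
A superharmonic `u ∈ C₀` is non-negative by the minimum principle: a negative minimum propagates
along edges, forcing the function to be constant and `c = 0` on a finite graph, and such a graph
has no Green function. The Dirichlet problems `𝓛v = 1_y` on an exhaustion `Kₙ` have solutions
increasing to `G(·, y)`: their limit solves `𝓛g = 1_y` and lies in `𝓓₀`, because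
`𝓠(vₖ - vₙ) = m(y) (vₖ(y) - vₙ(y))` by Green's formula and `𝓠` is lower semicontinuous.
Comparing `u` with the Dirichlet solutions gives `G𝓛u ≤ u`, and `𝓛(G𝓛u) = 𝓛u` by Fubini, so
`G𝓛u - u` is harmonic, non-positive and in `C₀`, hence zero.
-/

section

variable {b : X → X → ℝ} {c m : X → ℝ}

lemma FinSupp.exists_finset {f : X → ℝ} (hf : FinSupp f) : ∃ T : Finset X, ∀ x ∉ T, f x = 0 :=
  have hs : (Function.support f).Finite := hf
  ⟨hs.toFinset, fun x hx => by rwa [hs.mem_toFinset, Function.notMem_support] at hx⟩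

lemma finSupp_of_eq_zero {f : X → ℝ} {T : Finset X} (hf : ∀ x ∉ T, f x = 0) : FinSupp f :=
  T.finite_toSet.subset fun x hx => by
    by_contra h
    exact hx (hf x h)

lemma FinSupp.sub {f₁ f₂ : X → ℝ} (hf₁ : FinSupp f₁) (hf₂ : FinSupp f₂) : FinSupp (f₁ - f₂) :=
  (hf₁.union hf₂).subset (Function.support_sub f₁ f₂)

lemma FinSupp.summable_mul {ψ : X → ℝ} (hψ : FinSupp ψ) (a : X → ℝ) :
    Summable fun x => a x * ψ x := by
  obtain ⟨T, hT⟩ := hψ.exists_finset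
  exact summable_of_ne_finset_zero (s := T) fun x hx => by simp [hT x hx]

lemma FinSupp.memF {f : X → ℝ} (hf : FinSupp f) : MemF b f := fun x => by
  obtain ⟨T, hT⟩ := hf.exists_finset
  exact summable_of_ne_finset_zero (s := T) fun z hz => by simp [hT z hz]

lemma MemC0.of_abs_le {f₁ f₂ : X → ℝ} (hf₂ : MemC0 f₂) (h : ∀ x, |f₁ x| ≤ |f₂ x|) :
    MemC0 f₁ := fun ε hε =>
  (hf₂ ε hε).subset fun x (hx : ε ≤ |f₁ x|) => hx.trans (h x)

lemma MemF.of_abs_le (hg : IsGraph b c m) {f₁ f₂ : X → ℝ} (hf₂ : MemF b f₂)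
    (h : ∀ z, |f₁ z| ≤ |f₂ z|) : MemF b f₁ := fun x =>
  (hf₂ x).of_nonneg_of_le (fun z => mul_nonneg (hg.nonneg x z) (abs_nonneg _))
    fun z => mul_le_mul_of_nonneg_left (h z) (hg.nonneg x z)

lemma MemF.smul {f : X → ℝ} (hf : MemF b f) (a : ℝ) : MemF b (a • f) := fun x =>
  ((hf x).mul_left |a|).congr fun z => by simp only [Pi.smul_apply, smul_eq_mul, abs_mul]; ring

lemma MemF.sub (hg : IsGraph b c m) {f₁ f₂ : X → ℝ} (hf₁ : MemF b f₁) (hf₂ : MemF b f₂) :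
    MemF b (f₁ - f₂) := fun x =>
  ((hf₁ x).add (hf₂ x)).of_nonneg_of_le (fun z => mul_nonneg (hg.nonneg x z) (abs_nonneg _))
    fun z => by
      rw [← mul_add]
      exact mul_le_mul_of_nonneg_left (abs_sub _ _) (hg.nonneg x z)

lemma IsGraph.summable_mul (hg : IsGraph b c m) {f : X → ℝ} (hf : MemF b f) (x : X) :
    Summable fun z => b x z * f z :=
  .of_abs <| (hf x).congr fun z => by rw [abs_mul, abs_of_nonneg (hg.nonneg x z)]

lemma IsGraph.summable_mul_sub (hg : IsGraph b c m) {f : X → ℝ} (hf : MemF b f) (x : X) :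
    Summable fun z => b x z * (f x - f z) :=
  (((hg.deg_summable x).mul_right (f x)).sub (hg.summable_mul hf x)).congr fun z => by ring

lemma IsGraph.mul_lap (hg : IsGraph b c m) (f : X → ℝ) (x : X) :
    m x * lap b c m f x = ∑' z, b x z * (f x - f z) + c x * f x := by
  have := (hg.m_pos x).ne'
  unfold lap
  field_simp

lemma IsGraph.mul_lap_eq (hg : IsGraph b c m) {f : X → ℝ} (hf : MemF b f) (x : X) :
    m x * lap b c m f x = (∑' z, b x z) * f x - ∑' z, b x z * f z + c x * f x := by
  rw [hg.mul_lap, ← tsum_mul_right,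
    ← ((hg.deg_summable x).mul_right _).tsum_sub (hg.summable_mul hf x)]
  simp only [mul_sub]

lemma lap_sum (hg : IsGraph b c m) {ι : Type*} {s : Finset ι} {f : ι → X → ℝ}
    (hf : ∀ i ∈ s, MemF b (f i)) (x : X) :
    lap b c m (∑ i ∈ s, f i) x = ∑ i ∈ s, lap b c m (f i) x := by
  simp only [lap, Finset.sum_apply, ← Finset.sum_sub_distrib, Finset.mul_sum]
  rw [Summable.tsum_finsetSum fun i hi => hg.summable_mul_sub (hf i hi) x, Finset.mul_sum,
    ← Finset.sum_add_distrib]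

lemma lap_smul (hg : IsGraph b c m) {f : X → ℝ} (hf : MemF b f) (a : ℝ) (x : X) :
    lap b c m (a • f) x = a * lap b c m f x := by
  simp only [lap, Pi.smul_apply, smul_eq_mul, ← mul_sub, mul_left_comm _ a,
    (hg.summable_mul_sub hf x).tsum_mul_left]
  ring

lemma lap_sub (hg : IsGraph b c m) {f₁ f₂ : X → ℝ} (hf₁ : MemF b f₁) (hf₂ : MemF b f₂) (x : X) :
    lap b c m (f₁ - f₂) x = lap b c m f₁ x - lap b c m f₂ x := by
  have hsplit : (fun z => b x z * ((f₁ - f₂) x - (f₁ - f₂) z))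
      = fun z => b x z * (f₁ x - f₁ z) - b x z * (f₂ x - f₂ z) :=
    funext fun z => by simp only [Pi.sub_apply]; ring
  unfold lap
  rw [hsplit, (hg.summable_mul_sub hf₁ x).tsum_sub (hg.summable_mul_sub hf₂ x), Pi.sub_apply]
  ring

section MinimumPrinciple

variable {o : X} {G : X → X → ℝ}

theorem IsGreen.infinite_of_c_eq_zero (hg : IsGraph b c m) (hG : IsGreen b c m o G)
    (hc : ∀ x, c x = 0) : Infinite X := by
  by_contra hfin
  have : Fintype X := @Fintype.ofFinite X (not_infinite_iff_finite.mp hfin)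
  set g : X → ℝ := fun z => G z o
  have hsum : ∑ x, m x * lap b c m g x = m o := by
    simp [g, hG.lap_eq o]
  -- the edge terms of `∑ m 𝓛g` cancel in pairs since `b` is symmetric
  have hflux : ∑ x, ∑ z, b x z * (g x - g z) = 0 := by
    have hanti : ∑ x, ∑ z, b x z * (g x - g z) = -∑ x, ∑ z, b x z * (g x - g z) := by
      conv_rhs => rw [Finset.sum_comm]
      simp only [← Finset.sum_neg_distrib]
      exact Finset.sum_congr rfl fun x _ => Finset.sum_congr rfl fun z _ => by
        rw [hg.symm z x]; ring
    linarith
  have hzero : ∑ x, m x * lap b c m g x = 0 := by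
    simpa [hg.mul_lap, hc, tsum_fintype] using hflux
  linarith [hg.m_pos o]

lemma IsGraph.eq_of_adj_of_isMin (hg : IsGraph b c m) {f : X → ℝ} (hf : MemF b f) {x : X}
    (hmin : ∀ z, f x ≤ f z) (hneg : f x < 0) (hlap : 0 ≤ lap b c m f x) :
    (∀ z, 0 < b x z → f z = f x) ∧ c x = 0 := by
  have hterm : ∀ z, 0 ≤ b x z * (f z - f x) := fun z =>
    mul_nonneg (hg.nonneg x z) (sub_nonneg.2 (hmin z))
  have hcf : 0 ≤ c x * -f x := mul_nonneg (hg.c_nonneg x) (by linarith)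
  have hS : Summable fun z => b x z * (f z - f x) :=
    (hg.summable_mul_sub hf x).neg.congr fun z => by ring
  have hmlap : m x * lap b c m f x = -(∑' z, b x z * (f z - f x)) - c x * -f x := by
    rw [hg.mul_lap, ← tsum_neg]
    simp only [neg_mul_eq_mul_neg, neg_sub]
    ring
  have hlap' := mul_nonneg (hg.m_pos x).le hlap
  have hsum_nonneg : 0 ≤ ∑' z, b x z * (f z - f x) := tsum_nonneg hterm
  have hsum0 : ∑' z, b x z * (f z - f x) = 0 := by linarith
  have hterm0 := congrFun ((hasSum_zero_iff_of_nonneg hterm).1 (hsum0 ▸ hS.hasSum))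
  refine ⟨fun z hz => ?_, ?_⟩
  · have := hterm0 z
    simp only [Pi.zero_apply, mul_eq_zero, hz.ne', false_or, sub_eq_zero] at this
    exact this
  · have : c x * -f x = 0 := by linarith
    simpa [hneg.ne] using this

lemma IsGraph.eq_of_isMin (hg : IsGraph b c m) {f : X → ℝ} (hf : MemF b f) {x₀ : X}
    (hmin : ∀ z, f x₀ ≤ f z) (hneg : f x₀ < 0) (hlap : ∀ x, f x = f x₀ → 0 ≤ lap b c m f x)
    (x : X) : f x = f x₀ := by
  obtain ⟨k, p, hp0, hpk, hpb⟩ := hg.connected x₀ x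
  suffices h : ∀ i ≤ k, f (p i) = f x₀ from hpk ▸ h k le_rfl
  intro i hi
  induction i with
  | zero => rw [hp0]
  | succ i ih =>
    have hpi := ih (by omega)
    have hadj := hg.eq_of_adj_of_isMin hf (x := p i) (hpi ▸ hmin) (hpi ▸ hneg) (hlap _ hpi)
    exact (hadj.1 _ (hpb i (by omega))).trans hpi

theorem nonneg_of_lap_nonneg (hg : IsGraph b c m) (hG : IsGreen b c m o G) {f : X → ℝ}
    (hf : MemF b f) (hlap : ∀ x, f x < 0 → 0 ≤ lap b c m f x)
    (hfin : ∀ t < 0, {x | f x ≤ t}.Finite) (x : X) : 0 ≤ f x := by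
  by_contra! hx
  obtain ⟨x₀, hx₀, hx₀min⟩ := (hfin _ hx).toFinset.exists_min_image f ⟨x, by simp⟩
  simp only [Set.Finite.mem_toFinset, Set.mem_ofPred_eq] at hx₀ hx₀min
  have hmin : ∀ z, f x₀ ≤ f z := fun z => by
    by_cases hz : f z ≤ f x
    · exact hx₀min z hz
    · linarith
  have hneg : f x₀ < 0 := by linarith
  have hconst := hg.eq_of_isMin hf hmin hneg fun z hz => hlap z (hz ▸ hneg)
  have hc : ∀ z, c z = 0 := fun z =>
    (hg.eq_of_adj_of_isMin hf (hconst z ▸ hmin) (hconst z ▸ hneg)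
      (hlap z (hconst z ▸ hneg))).2
  have := hG.infinite_of_c_eq_zero hg hc
  exact Set.infinite_univ ((hfin _ hneg).subset fun z _ => (hconst z).le)

theorem Superharmonic.nonneg_of_memC0 (hg : IsGraph b c m) (hG : IsGreen b c m o G)
    {u : X → ℝ} (hu : Superharmonic b c m u) (hC0 : MemC0 u) (x : X) : 0 ≤ u x :=
  nonneg_of_lap_nonneg hg hG hu.1 (fun z _ => hu.2 z) (fun t ht => (hC0 (-t) (by linarith)).subset
    fun z (hz : u z ≤ t) => show -t ≤ |u z| by rw [abs_of_neg (by linarith)]; linarith) x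

theorem nonneg_of_lap_nonneg_on (hg : IsGraph b c m) (hG : IsGreen b c m o G) {f : X → ℝ}
    (hf : MemF b f) {K : Finset X} (hout : ∀ x ∉ K, 0 ≤ f x) (hK : ∀ x ∈ K, 0 ≤ lap b c m f x)
    (x : X) : 0 ≤ f x := by
  have hneg_mem : ∀ z, f z < 0 → z ∈ K := fun z hz => by
    by_contra h
    linarith [hout z h]
  exact nonneg_of_lap_nonneg hg hG hf (fun z hz => hK z (hneg_mem z hz))
    (fun t ht => K.finite_toSet.subset fun z (hz : f z ≤ t) => hneg_mem z (by linarith)) x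

end MinimumPrinciple

section Dirichlet

variable {o : X} {G : X → X → ℝ}

def IsDirichletSolution (b : X → X → ℝ) (c m : X → ℝ) (K : Finset X) (g v : X → ℝ) : Prop :=
  (∀ x ∉ K, v x = 0) ∧ ∀ x ∈ K, lap b c m v x = g x

namespace IsDirichletSolution

variable {K : Finset X} {g v : X → ℝ}

lemma finSupp (hv : IsDirichletSolution b c m K g v) : FinSupp v := finSupp_of_eq_zero hv.1

lemma memF (hv : IsDirichletSolution b c m K g v) : MemF b v := hv.finSupp.memF

theorem le_of_le_lap (hg : IsGraph b c m) (hG : IsGreen b c m o G)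
    (hv : IsDirichletSolution b c m K g v) {f : X → ℝ} (hf : MemF b f)
    (hout : ∀ x ∉ K, 0 ≤ f x) (hlap : ∀ x ∈ K, g x ≤ lap b c m f x) (x : X) : v x ≤ f x := by
  have := nonneg_of_lap_nonneg_on hg hG (hf.sub hg hv.memF) (K := K)
    (fun x hx => by simpa [hv.1 x hx] using hout x hx)
    (fun x hx => by rw [lap_sub hg hf hv.memF, hv.2 x hx]; linarith [hlap x hx]) x
  simpa using this

theorem nonneg (hg : IsGraph b c m) (hG : IsGreen b c m o G)
    (hv : IsDirichletSolution b c m K g v) (hg₀ : ∀ x ∈ K, 0 ≤ g x) (x : X) : 0 ≤ v x :=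
  nonneg_of_lap_nonneg_on hg hG hv.memF (fun x hx => (hv.1 x hx).ge)
    (fun x hx => hv.2 x hx ▸ hg₀ x hx) x

end IsDirichletSolution

-- The matrix of `f ↦ m · 𝓛f` on functions supported in `K`, restricted to `K`.
def dirichletMatrix (b : X → X → ℝ) (c : X → ℝ) (K : Finset X) : Matrix K K ℝ :=
  Matrix.diagonal (fun x : K => ∑' y, b x y + c x) - Matrix.of fun x z : K => b x z

lemma mul_lap_extend (hg : IsGraph b c m) (K : Finset X) (w : K → ℝ) (x : K) :
    m x * lap b c m (fun z => if h : z ∈ K then w ⟨z, h⟩ else 0) x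
      = (dirichletMatrix b c K).mulVec w x := by
  have hfin : FinSupp fun z => if h : z ∈ K then w ⟨z, h⟩ else 0 :=
    finSupp_of_eq_zero (T := K) fun z hz => dif_neg hz
  have hsum : ∑' z, b x z * (if h : z ∈ K then w ⟨z, h⟩ else 0) = ∑ z : K, b x z * w z := by
    rw [tsum_eq_sum (s := K) fun z hz => by simp [hz], ← Finset.sum_coe_sort K]
    simp
  rw [hg.mul_lap_eq hfin.memF, hsum, dif_pos x.2]
  simp only [dirichletMatrix, Matrix.sub_mulVec, Matrix.mulVec_diagonal, Pi.sub_apply]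
  simp only [Matrix.mulVec, dotProduct, Matrix.of_apply]
  ring

theorem exists_isDirichletSolution (hg : IsGraph b c m) (hG : IsGreen b c m o G) (K : Finset X)
    (g : X → ℝ) : ∃ v, IsDirichletSolution b c m K g v := by
  set A := dirichletMatrix b c K
  set ext : (K → ℝ) → X → ℝ := fun w z => if h : z ∈ K then w ⟨z, h⟩ else 0
  have hext_out : ∀ w, ∀ x ∉ K, ext w x = 0 := fun w x hx => dif_neg hx
  have hlap_ext : ∀ w, ∀ x (hx : x ∈ K), lap b c m (ext w) x = A.mulVec w ⟨x, hx⟩ / m x :=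
    fun w x hx => by
      rw [← mul_lap_extend hg K w ⟨x, hx⟩, mul_div_cancel_left₀ _ (hg.m_pos x).ne']
  have hinj : Function.Injective A.mulVec := by
    refine (injective_iff_map_eq_zero A.mulVecLin).2 fun w hw => funext fun x => ?_
    have hsol : IsDirichletSolution b c m K 0 (ext w) :=
      ⟨hext_out w, fun x hx => by
        rw [hlap_ext w x hx]
        simp [show A.mulVec w = 0 from hw]⟩
    have hle := hsol.le_of_le_lap hg hG (f := 0) (fun _ => by simp)
      (fun _ _ => le_rfl) (fun x _ => by simp [lap]) x
    have hge := hsol.nonneg hg hG (fun _ _ => le_rfl) x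
    simp [ext] at hle hge ⊢
    exact le_antisymm hle hge
  obtain ⟨w, hw⟩ := Matrix.mulVec_surjective_iff_isUnit.2
    (Matrix.mulVec_injective_iff_isUnit.1 hinj) fun x => m x * g x
  refine ⟨ext w, hext_out w, fun x hx => ?_⟩
  rw [hlap_ext w x hx, hw, mul_div_cancel_left₀ _ (hg.m_pos x).ne']

end Dirichlet

section GreenFormula

def lapPairing (b : X → X → ℝ) (c m : X → ℝ) (φ ψ : X → ℝ) : ℝ :=
  ∑' x, m x * lap b c m φ x * ψ x

lemma lapPairing_eq_sum {φ ψ : X → ℝ} {T : Finset X} (hψ : ∀ x ∉ T, ψ x = 0) :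
    lapPairing b c m φ ψ = ∑ x ∈ T, m x * lap b c m φ x * ψ x :=
  tsum_eq_sum fun x hx => by simp [hψ x hx]

lemma lapPairing_sub_left (hg : IsGraph b c m) {f₁ f₂ ψ : X → ℝ} (hf₁ : MemF b f₁)
    (hf₂ : MemF b f₂) (hψ : FinSupp ψ) :
    lapPairing b c m (f₁ - f₂) ψ = lapPairing b c m f₁ ψ - lapPairing b c m f₂ ψ := by
  simp only [lapPairing, lap_sub hg hf₁ hf₂]
  rw [← (hψ.summable_mul _).tsum_sub (hψ.summable_mul _)]
  exact tsum_congr fun x => by ring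

lemma lapPairing_sub_right {φ ψ₁ ψ₂ : X → ℝ} (hψ₁ : FinSupp ψ₁) (hψ₂ : FinSupp ψ₂) :
    lapPairing b c m φ (ψ₁ - ψ₂) = lapPairing b c m φ ψ₁ - lapPairing b c m φ ψ₂ := by
  simp only [lapPairing, Pi.sub_apply, mul_sub]
  exact (hψ₁.summable_mul _).tsum_sub (hψ₂.summable_mul _)

lemma IsGraph.mul_lap_eq_sum (hg : IsGraph b c m) {φ : X → ℝ} {T : Finset X}
    (hφ : ∀ x ∉ T, φ x = 0) (x : X) :
    m x * lap b c m φ x = (∑' z, b x z + c x) * φ x - ∑ z ∈ T, b x z * φ z := by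
  rw [hg.mul_lap_eq (finSupp_of_eq_zero hφ).memF,
    tsum_eq_sum (f := fun z => b x z * φ z) fun z hz => by simp [hφ z hz]]
  ring

theorem lapPairing_comm (hg : IsGraph b c m) {φ ψ : X → ℝ} (hφ : FinSupp φ) (hψ : FinSupp ψ) :
    lapPairing b c m φ ψ = lapPairing b c m ψ φ := by
  obtain ⟨T₁, hT₁⟩ := hφ.exists_finset
  obtain ⟨T₂, hT₂⟩ := hψ.exists_finset
  have hφT : ∀ x ∉ T₁ ∪ T₂, φ x = 0 := fun x hx => hT₁ x (by simp_all)
  have hψT : ∀ x ∉ T₁ ∪ T₂, ψ x = 0 := fun x hx => hT₂ x (by simp_all)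
  simp only [lapPairing_eq_sum hφT, lapPairing_eq_sum hψT, hg.mul_lap_eq_sum hφT,
    hg.mul_lap_eq_sum hψT, sub_mul, Finset.sum_sub_distrib, Finset.sum_mul]
  congr 1
  · exact Finset.sum_congr rfl fun x _ => by ring
  · rw [Finset.sum_comm]
    exact Finset.sum_congr rfl fun x _ => Finset.sum_congr rfl fun z _ => by
      rw [hg.symm x z]; ring

-- `(φ x - φ y)² = φ x (φ x - φ y) - φ y (φ x - φ y)`, and the second term vanishes for `y ∉ T`.
lemma IsGraph.hasSum_mul_sq_sub (hg : IsGraph b c m) {φ : X → ℝ} {T : Finset X}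
    (hφ : ∀ x ∉ T, φ x = 0) (x : X) :
    HasSum (fun y => b x y * (φ x - φ y) ^ 2)
      (φ x * ∑' y, b x y * (φ x - φ y) - ∑ y ∈ T, φ y * (b x y * (φ x - φ y))) := by
  have h₁ := ((hg.summable_mul_sub (finSupp_of_eq_zero hφ).memF x).hasSum).mul_left (φ x)
  have h₂ : HasSum (fun y => φ y * (b x y * (φ x - φ y)))
      (∑ y ∈ T, φ y * (b x y * (φ x - φ y))) :=
    hasSum_sum_of_ne_finset_zero fun y hy => by simp [hφ y hy]
  exact (h₁.sub h₂).congr_fun fun y => by ring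

theorem IsGraph.hasSum_tsum_mul_sq_sub (hg : IsGraph b c m) {φ : X → ℝ} {T : Finset X}
    (hφ : ∀ x ∉ T, φ x = 0) :
    HasSum (fun x => ∑' y, b x y * (φ x - φ y) ^ 2)
      (2 * ∑ x ∈ T, φ x * ∑' y, b x y * (φ x - φ y)) := by
  have hF := (finSupp_of_eq_zero hφ).memF (b := b)
  have h₁ : HasSum (fun x => φ x * ∑' y, b x y * (φ x - φ y))
      (∑ x ∈ T, φ x * ∑' y, b x y * (φ x - φ y)) :=
    hasSum_sum_of_ne_finset_zero fun x hx => by simp [hφ x hx]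
  have h₂ : HasSum (fun x => ∑ y ∈ T, φ y * (b x y * (φ x - φ y)))
      (∑ y ∈ T, φ y * -∑' x, b y x * (φ y - φ x)) := by
    refine hasSum_sum fun y _ => ((hg.summable_mul_sub hF y).hasSum.neg.mul_left (φ y)).congr_fun
      fun x => ?_
    rw [hg.symm y x]
    ring
  have hval : 2 * ∑ x ∈ T, φ x * ∑' y, b x y * (φ x - φ y)
      = ∑ x ∈ T, φ x * ∑' y, b x y * (φ x - φ y)
        - ∑ y ∈ T, φ y * -∑' x, b y x * (φ y - φ x) := by
    simp only [mul_neg, Finset.sum_neg_distrib, sub_neg_eq_add]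
    ring
  rw [hval]
  exact (h₁.sub h₂).congr_fun fun x => (hg.hasSum_mul_sq_sub hφ x).tsum_eq

theorem energy_eq_lapPairing (hg : IsGraph b c m) {φ : X → ℝ} (hφ : FinSupp φ) :
    energy b c φ = ENNReal.ofReal (lapPairing b c m φ φ) := by
  obtain ⟨T, hT⟩ := hφ.exists_finset
  have hedge := hg.hasSum_tsum_mul_sq_sub hT
  set S := ∑ x ∈ T, φ x * ∑' y, b x y * (φ x - φ y)
  have hS : 0 ≤ S := by
    have := hedge.nonneg fun x => tsum_nonneg fun y => mul_nonneg (hg.nonneg x y) (sq_nonneg _)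
    linarith
  have hC : 0 ≤ ∑ x ∈ T, c x * φ x ^ 2 :=
    Finset.sum_nonneg fun x _ => mul_nonneg (hg.c_nonneg x) (sq_nonneg _)
  have hpair : lapPairing b c m φ φ = S + ∑ x ∈ T, c x * φ x ^ 2 := by
    rw [lapPairing_eq_sum hT, ← Finset.sum_add_distrib]
    exact Finset.sum_congr rfl fun x _ => by rw [hg.mul_lap]; ring
  have hrows : ∀ x, ∑' y, ENNReal.ofReal (b x y * (φ x - φ y) ^ 2)
      = ENNReal.ofReal (∑' y, b x y * (φ x - φ y) ^ 2) := fun x =>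
    (ENNReal.ofReal_tsum_of_nonneg (fun y => mul_nonneg (hg.nonneg x y) (sq_nonneg _))
      (hg.hasSum_mul_sq_sub hT x).summable).symm
  have hedges : ∑' x, ENNReal.ofReal (∑' y, b x y * (φ x - φ y) ^ 2) = ENNReal.ofReal (2 * S) := by
    rw [← hedge.tsum_eq, ENNReal.ofReal_tsum_of_nonneg
      (fun x => tsum_nonneg fun y => mul_nonneg (hg.nonneg x y) (sq_nonneg _)) hedge.summable]
  have hkilling :
      ∑' x, ENNReal.ofReal (c x * φ x ^ 2) = ENNReal.ofReal (∑ x ∈ T, c x * φ x ^ 2) := by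
    rw [ENNReal.ofReal_sum_of_nonneg fun x _ => mul_nonneg (hg.c_nonneg x) (sq_nonneg _)]
    exact tsum_eq_sum fun x hx => by simp [hT x hx]
  rw [energy, tsum_congr hrows, hedges, hkilling, hpair, ENNReal.ofReal_add hS hC,
    ENNReal.ofReal_mul zero_le_two, ← mul_assoc, ENNReal.ofReal_ofNat,
    ENNReal.div_mul_cancel two_ne_zero ENNReal.ofNat_ne_top, one_mul]

theorem IsDirichletSolution.lapPairing_eq {K : Finset X} {y : X} {v ψ : X → ℝ}
    (hv : IsDirichletSolution b c m K (fun x => if x = y then 1 else 0) v)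
    (hψ : ∀ x ∉ K, ψ x = 0) : lapPairing b c m v ψ = m y * ψ y := by
  rw [lapPairing_eq_sum hψ, Finset.sum_congr rfl fun x hx => by rw [hv.2 x hx]]
  by_cases hy : y ∈ K
  · simp [hy]
  · simp [hψ y hy]

theorem IsDirichletSolution.energy_sub (hg : IsGraph b c m) {K K' : Finset X} (hKK' : K ⊆ K')
    {y : X} {v v' : X → ℝ}
    (hv : IsDirichletSolution b c m K (fun x => if x = y then 1 else 0) v)
    (hv' : IsDirichletSolution b c m K' (fun x => if x = y then 1 else 0) v') :
    energy b c (v' - v) = ENNReal.ofReal (m y * (v' y - v y)) := by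
  have hv_out : ∀ x ∉ K', v x = 0 := fun x hx => hv.1 x fun h => hx (hKK' h)
  rw [energy_eq_lapPairing hg (hv'.finSupp.sub hv.finSupp),
    lapPairing_sub_left hg hv'.memF hv.memF (hv'.finSupp.sub hv.finSupp),
    lapPairing_sub_right hv'.finSupp hv.finSupp, lapPairing_sub_right hv'.finSupp hv.finSupp,
    lapPairing_comm hg hv.finSupp hv'.finSupp, hv'.lapPairing_eq hv'.1,
    hv'.lapPairing_eq hv_out, hv.lapPairing_eq hv.1]
  ring_nf

end GreenFormula

section Convergence

variable {o : X}

lemma tsum_le_liminf_tsum {α : Type*} {f : ℕ → α → ℝ≥0∞} {g : α → ℝ≥0∞}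
    (h : ∀ a, g a ≤ liminf (fun n => f n a) atTop) :
    ∑' a, g a ≤ liminf (fun n => ∑' a, f n a) atTop := by
  let _ : MeasurableSpace α := ⊤
  calc ∑' a, g a ≤ ∑' a, liminf (fun n => f n a) atTop := ENNReal.tsum_le_tsum h
    _ ≤ liminf (fun n => ∑' a, f n a) atTop := by
      simpa only [lintegral_count' measurable_from_top] using
        lintegral_liminf_le (μ := Measure.count) fun n => measurable_from_top

lemma liminf_add_liminf_le {u v : ℕ → ℝ≥0∞} :
    liminf u atTop + liminf v atTop ≤ liminf (u + v) atTop := by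
  simp only [liminf_eq_iSup_iInf_of_nat]
  have hmono : ∀ w : ℕ → ℝ≥0∞, Monotone fun n => ⨅ i ≥ n, w i := fun w _ _ hnk =>
    le_iInf₂ fun i hi => iInf₂_le i (hnk.trans hi)
  rw [ENNReal.iSup_add_iSup fun i j => ⟨max i j,
    add_le_add (hmono u (le_max_left i j)) (hmono v (le_max_right i j))⟩]
  exact iSup_mono fun n => le_iInf₂ fun i hi => add_le_add (iInf₂_le i hi) (iInf₂_le i hi)

theorem energy_le_liminf {f : ℕ → X → ℝ} {g : X → ℝ}
    (h : ∀ x, Tendsto (fun n => f n x) atTop (𝓝 (g x))) :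
    energy b c g ≤ liminf (fun n => energy b c (f n)) atTop := by
  set A : (X → ℝ) → ℝ≥0∞ := fun f => ∑' x, ∑' y, ENNReal.ofReal (b x y * (f x - f y) ^ 2)
  set C : (X → ℝ) → ℝ≥0∞ := fun f => ∑' x, ENNReal.ofReal (c x * f x ^ 2)
  have hA : A g ≤ liminf (fun n => A (f n)) atTop :=
    tsum_le_liminf_tsum fun x => tsum_le_liminf_tsum fun y =>
      ((ENNReal.continuous_ofReal.tendsto _).comp
        ((((h x).sub (h y)).pow 2).const_mul (b x y))).liminf_eq.ge
  have hC : C g ≤ liminf (fun n => C (f n)) atTop :=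
    tsum_le_liminf_tsum fun x =>
      ((ENNReal.continuous_ofReal.tendsto _).comp (((h x).pow 2).const_mul (c x))).liminf_eq.ge
  calc energy b c g = 1 / 2 * A g + C g := rfl
    _ ≤ 1 / 2 * liminf (fun n => A (f n)) atTop + liminf (fun n => C (f n)) atTop := by
      gcongr
    _ = liminf (fun n => 1 / 2 * A (f n)) atTop + liminf (fun n => C (f n)) atTop := by
      rw [ENNReal.liminf_const_mul_of_ne_top (by simp)]
    _ ≤ liminf (fun n => energy b c (f n)) atTop :=
      liminf_add_liminf_le

theorem memD0_of_energy_sub_le {g : X → ℝ} {φ : ℕ → X → ℝ} {r : ℕ → ℝ} (hφ : ∀ n, FinSupp (φ n))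
    (hle : ∀ n, energy b c (g - φ n) ≤ ENNReal.ofReal (r n)) (hr : Tendsto r atTop (𝓝 0))
    (ho : Tendsto (fun n => φ n o) atTop (𝓝 (g o))) : MemD0 b c o g := by
  refine ⟨φ, hφ, tendsto_of_tendsto_of_tendsto_of_le_of_le tendsto_const_nhds
    (g := fun _ => 0) (h := fun n => ENNReal.ofReal (r n) + ENNReal.ofReal ((g o - φ n o) ^ 2))
    ?_ (fun _ => zero_le) fun n => add_le_add_left (hle n) _⟩
  have hsq : Tendsto (fun n => (g o - φ n o) ^ 2) atTop (𝓝 0) := by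
    simpa using ((tendsto_const_nhds (x := g o)).sub ho).pow 2
  simpa using (ENNReal.tendsto_ofReal hr).add (ENNReal.tendsto_ofReal hsq)

theorem tendsto_lap_of_dominated (hg : IsGraph b c m) {f : ℕ → X → ℝ} {g F : X → ℝ}
    (hF : MemF b F) (hbound : ∀ n z, |f n z| ≤ |F z|)
    (h : ∀ z, Tendsto (fun n => f n z) atTop (𝓝 (g z))) (x : X) :
    Tendsto (fun n => lap b c m (f n) x) atTop (𝓝 (lap b c m g x)) := by
  have hsum : Tendsto (fun n => ∑' z, b x z * (f n x - f n z)) atTop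
      (𝓝 (∑' z, b x z * (g x - g z))) := by
    refine tendsto_tsum_of_dominated_convergence (bound := fun z => b x z * (|F x| + |F z|))
      ((((hg.deg_summable x).mul_right |F x|).add (hF x)).congr fun z => by ring)
      (fun z => ((h x).sub (h z)).const_mul _) (Eventually.of_forall fun n z => ?_)
    rw [Real.norm_eq_abs, abs_mul, abs_of_nonneg (hg.nonneg x z)]
    exact mul_le_mul_of_nonneg_left ((abs_sub _ _).trans (add_le_add (hbound n x) (hbound n z)))
      (hg.nonneg x z)
  exact (hsum.const_mul _).add ((h x).const_mul _)

end Convergence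

section GreenLimit

variable {o : X} {G : X → X → ℝ} {y : X}

theorem IsDirichletSolution.le_green (hg : IsGraph b c m) (hG : IsGreen b c m o G)
    {K : Finset X} {v : X → ℝ}
    (hv : IsDirichletSolution b c m K (fun x => if x = y then 1 else 0) v) (x : X) :
    v x ≤ G x y :=
  hv.le_of_le_lap hg hG (hG.memF y) (fun x _ => (hG.pos x y).le) (fun x _ => (hG.lap_eq y x).ge) x

theorem IsDirichletSolution.mono (hg : IsGraph b c m) (hG : IsGreen b c m o G)
    {K K' : Finset X} (hKK' : K ⊆ K') {v v' : X → ℝ}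
    (hv : IsDirichletSolution b c m K (fun x => if x = y then 1 else 0) v)
    (hv' : IsDirichletSolution b c m K' (fun x => if x = y then 1 else 0) v') (x : X) :
    v x ≤ v' x :=
  hv.le_of_le_lap hg hG hv'.memF
    (fun z _ => hv'.nonneg hg hG (fun _ _ => ite_nonneg zero_le_one le_rfl) z)
    (fun z hz => (hv'.2 z (hKK' hz)).ge) x

theorem tendsto_green_of_exhaustion (hg : IsGraph b c m) (hG : IsGreen b c m o G)
    {K : ℕ → Finset X} (hmono : Monotone K) (hK : ∀ x, ∃ n, x ∈ K n) {v : ℕ → X → ℝ}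
    (hv : ∀ n, IsDirichletSolution b c m (K n) (fun x => if x = y then 1 else 0) (v n)) (x : X) :
    Tendsto (fun n => v n x) atTop (𝓝 (G x y)) := by
  have hv0 : ∀ n z, 0 ≤ v n z := fun n =>
    (hv n).nonneg hg hG fun _ _ => ite_nonneg zero_le_one le_rfl
  have hvG : ∀ n z, v n z ≤ G z y := fun n => (hv n).le_green hg hG
  have hvmono : ∀ z, Monotone fun n => v n z := fun z =>
    monotone_nat_of_le_succ fun n => (hv n).mono hg hG (hmono n.le_succ) (hv (n + 1)) z
  set g : X → ℝ := fun z => ⨆ n, v n z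
  have htend : ∀ z, Tendsto (fun n => v n z) atTop (𝓝 (g z)) := fun z =>
    tendsto_atTop_ciSup (hvmono z) ⟨G z y, Set.forall_mem_range.2 fun n => hvG n z⟩
  have hbound : ∀ n z, |v n z| ≤ |G z y| := fun n z => by
    rw [abs_of_nonneg (hv0 n z), abs_of_pos (hG.pos z y)]
    exact hvG n z
  have hgF : MemF b g := (hG.memF y).of_abs_le hg fun z =>
    le_of_tendsto' (htend z).abs fun n => hbound n z
  have hlap : ∀ z, lap b c m g z = if z = y then 1 else 0 := fun z => by
    obtain ⟨N, hN⟩ := hK z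
    refine tendsto_nhds_unique (tendsto_lap_of_dominated hg (hG.memF y) hbound htend z)
      (tendsto_const_nhds.congr' (eventually_atTop.2 ⟨N, fun n hn => ?_⟩))
    exact ((hv n).2 z (hmono hn hN)).symm
  -- by Fatou, `𝓠(g - vₙ) ≤ m(y) (g(y) - vₙ(y)) → 0`, so `g ∈ 𝓓₀` and `g = G(·, y)` by uniqueness
  have henergy : ∀ n, energy b c (g - v n) ≤ ENNReal.ofReal (m y * (g y - v n y)) := fun n =>
    calc energy b c (g - v n) ≤ liminf (fun k => energy b c (v k - v n)) atTop :=
          energy_le_liminf fun z => (htend z).sub tendsto_const_nhds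
      _ = ENNReal.ofReal (m y * (g y - v n y)) := by
        refine Tendsto.liminf_eq (Tendsto.congr' (eventually_atTop.2 ⟨n, fun k hk =>
          ((hv n).energy_sub hg (hmono hk) (hv k)).symm⟩) ?_)
        exact ENNReal.tendsto_ofReal (((htend y).sub tendsto_const_nhds).const_mul (m y))
  have hD0 : MemD0 b c o g := memD0_of_energy_sub_le (fun n => (hv n).finSupp) henergy
    (by simpa using ((tendsto_const_nhds (x := g y)).sub (htend y)).const_mul (m y)) (htend o)
  simpa [congrFun (hG.unique y g hgF hD0 hlap) x] using htend x

end GreenLimit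

section Potential

variable {o : X} {G : X → X → ℝ}

lemma exists_exhaustion [Countable X] : ∃ K : ℕ → Finset X, Monotone K ∧ ∀ x, ∃ n, x ∈ K n := by
  obtain ⟨K, hmono, hK⟩ := exists_seq_monotone_tendsto_atTop_atTop (Finset X)
  exact ⟨K, hmono, fun x =>
    ((tendsto_atTop.1 hK {x}).exists).imp fun n hn => hn (Finset.mem_singleton_self x)⟩

theorem Superharmonic.sum_green_mul_lap_le [Countable X] (hg : IsGraph b c m)
    (hG : IsGreen b c m o G) {u : X → ℝ} (hu : Superharmonic b c m u) (hu0 : ∀ x, 0 ≤ u x)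
    (F : Finset X) (x : X) : ∑ y ∈ F, G x y * lap b c m u y ≤ u x := by
  obtain ⟨K, hmono, hK⟩ := exists_exhaustion (X := X)
  choose v hv using fun y n =>
    exists_isDirichletSolution hg hG (K n) (fun x => if x = y then 1 else 0)
  set k := lap b c m u
  have hsol : ∀ n, IsDirichletSolution b c m (K n) (fun z => if z ∈ F then k z else 0)
      (∑ y ∈ F, k y • v y n) := fun n =>
    ⟨fun z hz => by simp [(hv _ n).1 z hz], fun z hz => by
      rw [lap_sum hg fun y _ => (hv y n).memF.smul _]
      simp [lap_smul hg (hv _ n).memF, (hv _ n).2 z hz]⟩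
  have hle : ∀ n, (∑ y ∈ F, k y • v y n) x ≤ u x := fun n =>
    (hsol n).le_of_le_lap hg hG hu.1 (fun z _ => hu0 z) (fun z _ => by
      split_ifs
      · exact le_rfl
      · exact hu.2 z) x
  have hlim : Tendsto (fun n => (∑ y ∈ F, k y • v y n) x) atTop (𝓝 (∑ y ∈ F, G x y * k y)) := by
    simp only [Finset.sum_apply, Pi.smul_apply, smul_eq_mul, mul_comm (G x _)]
    exact tendsto_finsetSum _ fun y _ =>
      (tendsto_green_of_exhaustion hg hG hmono hK (hv y) x).const_mul (k y)
  exact le_of_tendsto' hlim hle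

theorem Superharmonic.memG_lap [Countable X] (hg : IsGraph b c m) (hG : IsGreen b c m o G)
    {u : X → ℝ} (hu : Superharmonic b c m u) (hu0 : ∀ x, 0 ≤ u x) : MemG G (lap b c m u) :=
  fun x => summable_of_sum_le (fun y => mul_nonneg (hG.pos x y).le (abs_nonneg _)) fun F => by
    simpa only [abs_of_nonneg (hu.2 _)] using hu.sum_green_mul_lap_le hg hG hu0 F x

theorem Superharmonic.gop_lap_le [Countable X] (hg : IsGraph b c m) (hG : IsGreen b c m o G)
    {u : X → ℝ} (hu : Superharmonic b c m u) (hu0 : ∀ x, 0 ≤ u x) (x : X) :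
    Gop G (lap b c m u) x ≤ u x :=
  ((hu.memG_lap hg hG hu0 x).congr fun y => by rw [abs_of_nonneg (hu.2 y)]).tsum_le_of_sum_le
    (hu.sum_green_mul_lap_le hg hG hu0 · x)

-- Fubini for the non-negative double series `∑_z ∑_y b(x,z) G(z,y) k(y)`.
theorem lap_gop (hg : IsGraph b c m) (hG : IsGreen b c m o G) {k : X → ℝ} (hk : ∀ x, 0 ≤ k x)
    (hGk : MemG G k) (hF : MemF b (Gop G k)) (x : X) : lap b c m (Gop G k) x = k x := by
  have hk' : ∀ z, Summable fun y => G z y * k y := fun z =>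
    (hGk z).congr fun y => by rw [abs_of_nonneg (hk y)]
  set f : X → X → ℝ := fun z y => b x z * (G z y * k y)
  have hrow : ∀ z, Summable (f z) := fun z => (hk' z).mul_left _
  have hcol : ∀ y, Summable fun z => f z y := fun y =>
    ((hg.summable_mul (hG.memF y) x).mul_right (k y)).congr fun z => by ring
  have hprod : Summable (Function.uncurry f) :=
    (summable_prod_of_nonneg fun p => mul_nonneg (hg.nonneg x p.1)
      (mul_nonneg (hG.pos p.1 p.2).le (hk p.2))).2
      ⟨hrow, (hg.summable_mul hF x).congr fun z => ((hk' z).tsum_mul_left _).symm⟩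
  have hswap : ∑' z, b x z * Gop G k z = ∑' y, (∑' z, b x z * G z y) * k y :=
    calc ∑' z, b x z * Gop G k z = ∑' z, ∑' y, f z y :=
          tsum_congr fun z => ((hk' z).tsum_mul_left _).symm
      _ = ∑' y, ∑' z, f z y := (hprod.tsum_comm' hrow hcol).symm
      _ = ∑' y, (∑' z, b x z * G z y) * k y := tsum_congr fun y => by
          rw [← tsum_mul_right]
          exact tsum_congr fun z => by ring
  have hcolsum : ∀ y, ∑' z, b x z * G z y
      = (∑' z, b x z + c x) * G x y - m x * (if x = y then 1 else 0) := fun y => by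
    have := hg.mul_lap_eq (hG.memF y) x
    rw [hG.lap_eq y x] at this
    linarith
  have hdelta : HasSum (fun y => m x * (if x = y then 1 else 0) * k y) (m x * k x) :=
    (hasSum_ite_eq x (m x * k x)).congr_fun fun y => by
      rcases eq_or_ne y x with rfl | hyx
      · simp
      · simp [hyx, hyx.symm]
  have hsum : ∑' y, (∑' z, b x z * G z y) * k y = (∑' z, b x z + c x) * Gop G k x - m x * k x := by
    simp only [hcolsum, sub_mul, mul_assoc]
    rw [((hk' x).mul_left _).tsum_sub (by simpa only [mul_assoc] using hdelta.summable),
      tsum_mul_left, ← hdelta.tsum_eq]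
    simp only [Gop, mul_assoc]
  apply mul_left_cancel₀ (hg.m_pos x).ne'
  rw [hg.mul_lap_eq hF, hswap, hsum]
  ring

end Potential

end

/-- Proposition 2.7. If `u ∈ C₀(X) ∩ 𝓕` is superharmonic on a
connected transient graph, then `u` is a potential. -/
theorem stmt7 {X : Type*} [Countable X] (b : X → X → ℝ) (c m : X → ℝ) (o : X)
    (G : X → X → ℝ) (hg : IsGraph b c m) (hG : IsGreen b c m o G)
    (u : X → ℝ) (hC0 : MemC0 u) (hsup : Superharmonic b c m u) :
    IsPotential b c m G u := by
  have hu0 := hsup.nonneg_of_memC0 hg hG hC0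
  have hle := hsup.gop_lap_le hg hG hu0
  have hGk0 : ∀ x, 0 ≤ Gop G (lap b c m u) x := fun x =>
    tsum_nonneg fun y => mul_nonneg (hG.pos x y).le (hsup.2 y)
  have hGkF : MemF b (Gop G (lap b c m u)) := hsup.1.of_abs_le hg fun x => by
    rw [abs_of_nonneg (hGk0 x), abs_of_nonneg (hu0 x)]
    exact hle x
  have hharm : Superharmonic b c m (Gop G (lap b c m u) - u) :=
    ⟨hGkF.sub hg hsup.1, fun x => by
      rw [lap_sub hg hGkF hsup.1, lap_gop hg hG hsup.2 (hsup.memG_lap hg hG hu0) hGkF, sub_self]⟩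
  have hC0' : MemC0 (Gop G (lap b c m u) - u) := hC0.of_abs_le fun x => by
    rw [Pi.sub_apply, abs_of_nonpos (by linarith [hle x]), abs_of_nonneg (hu0 x)]
    linarith [hGk0 x]
  have hge := hharm.nonneg_of_memC0 hg hG hC0'
  exact ⟨hsup.1, hsup.memG_lap hg hG hu0,
    funext fun x => le_antisymm (by simpa using hge x) (hle x)⟩

end HG
end
end

section
/- Let (b,c) be a connected graph over (X,m) and let w be a null-critical Hardy type weight. Then w is optimal near infinity: for each λ > 0 and each finite set K ⊆ X, there is some φ ∈ C_c(X) supported in X ∖ K such that 𝓠(φ) < ∑_{x ∈ X∖K} m(x)·(w(x) + λ|w(x)|)·φ(x)². -/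
open Filter MeasureTheory Topology
open scoped ENNReal NNReal

noncomputable section

namespace HG

variable {X : Type*}

open scoped Classical

-- ===== auxiliary development =====

private lemma quad_zero {p q : ℝ} (hp : 0 ≤ p) (h : ∀ t : ℝ, 0 ≤ p * t ^ 2 + 2 * (q * t)) :
    q = 0 := by
  have hp1 : (0:ℝ) < p + 1 := by linarith
  have h1 := h (-(q / (p + 1)))
  have e1 : p * (-(q / (p + 1))) ^ 2 + 2 * (q * -(q / (p + 1))) =
      -(q ^ 2 * (p + 2)) / (p + 1) ^ 2 := by field_simp; ring
  rw [e1] at h1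
  have e3 : (0:ℝ) ≤ -(q ^ 2 * (p + 2)) := by
    have h4 := mul_le_mul_of_nonneg_right h1 (le_of_lt (pow_pos hp1 2))
    rw [zero_mul, div_mul_cancel₀] at h4
    · exact h4
    · positivity
  nlinarith [sq_nonneg q]

open scoped RealInnerProductSpace in
private lemma psd_solve {ι : Type*} [Fintype ι]
    (T : EuclideanSpace ℝ ι →ₗ[ℝ] EuclideanSpace ℝ ι)
    (hT : ∀ x y : EuclideanSpace ℝ ι, ⟪T x, y⟫ = ⟪x, T y⟫)
    (l : EuclideanSpace ℝ ι) (c₀ : ℝ)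
    (h : ∀ e : EuclideanSpace ℝ ι, 0 ≤ ⟪e, T e⟫ + 2 * ⟪l, e⟫ + c₀) :
    ∃ e, T e = -l := by
  have hker : (LinearMap.range T)ᗮ = LinearMap.ker T := by
    ext x
    simp only [Submodule.mem_orthogonal, LinearMap.mem_ker, LinearMap.mem_range]
    constructor
    · intro hx
      have h1 : ⟪T x, T x⟫ = 0 := by
        rw [hT, real_inner_comm]
        exact hx (T (T x)) ⟨T x, rfl⟩
      exact inner_self_eq_zero.mp h1
    · rintro hx u ⟨y, hy⟩
      rw [← hy, hT, hx, inner_zero_right]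
  have hrange : LinearMap.range T = (LinearMap.ker T)ᗮ := by
    rw [← hker, Submodule.orthogonal_orthogonal]
  have hmem : -l ∈ LinearMap.range T := by
    rw [hrange, Submodule.mem_orthogonal]
    intro k hk
    rw [LinearMap.mem_ker] at hk
    have key : ⟪l, k⟫ = 0 := by
      have h0 : ∀ t : ℝ, 0 ≤ 2 * (⟪l, k⟫ * t) + c₀ := by
        intro t
        have h5 := h (t • k)
        have h6 : T (t • k) = 0 := by rw [_root_.map_smul, hk, smul_zero]
        rw [h6, inner_zero_right, real_inner_smul_right] at h5
        ring_nf at h5 ⊢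
        linarith
      by_contra hq
      have ht := h0 (-(c₀ + 1) / (2 * ⟪l, k⟫))
      have gen : ∀ d A : ℝ, d ≠ 0 → 2 * (d * (A / (2 * d))) = A := by
        intro d A hd; field_simp
      have e2 := gen ⟪l, k⟫ (-(c₀ + 1)) hq
      rw [e2] at ht
      linarith
    rw [inner_neg_right, real_inner_comm, key, neg_zero]
  obtain ⟨e, he⟩ := hmem
  exact ⟨e, he⟩

private lemma summable_of_partial_bounded {X : Type*} {f : X → ℝ} (h0 : ∀ x, 0 ≤ f x) (C : ℝ)
    (h : ∀ F : Finset X, ∑ x ∈ F, f x ≤ C) : Summable f ∧ ∑' x, f x ≤ C := by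
  obtain ⟨a, ha⟩ := Real.exists_isLUB (s := Set.range fun s : Finset X => ∑ x ∈ s, f x)
    ⟨0, ⟨∅, by simp⟩⟩ ⟨C, by rintro r ⟨s, rfl⟩; exact h s⟩
  have hsum : HasSum f a := hasSum_of_isLUB_of_nonneg a h0 ha
  refine ⟨hsum.summable, ?_⟩
  rw [hsum.tsum_eq]
  exact ha.2 (by rintro r ⟨s, rfl⟩; exact h s)


def Dg (b : X → X → ℝ) (x : X) : ℝ := ∑' y, b x y

def coeffg (b : X → X → ℝ) (c m w : X → ℝ) (x : X) : ℝ := Dg b x + c x - m x * w x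

def Qr (b : X → X → ℝ) (c : X → ℝ) (φ : X → ℝ) : ℝ :=
  (1/2) * ∑' p : X × X, b p.1 p.2 * (φ p.1 - φ p.2) ^ 2 + ∑' x, c x * φ x ^ 2

def PS (b : X → X → ℝ) (c m w : X → ℝ) (S : Finset X) (x : X) : ℝ :=
  Dg b x - (∑ y ∈ S, b x y) + c x - m x * w x

def LS (b : X → X → ℝ) (c m w : X → ℝ) (S : Finset X) (u : X → ℝ) (x : X) : ℝ :=
  (∑ y ∈ S, b x y * (u x - u y)) + PS b c m w S x * u x

def BS (b : X → X → ℝ) (c m w : X → ℝ) (S : Finset X) (φ ψ : X → ℝ) : ℝ :=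
  ∑ x ∈ S, φ x * LS b c m w S ψ x

section FiniteAlg
variable {b : X → X → ℝ} {c m w : X → ℝ}
  {S : Finset X}

lemma hswap (hb_symm : ∀ x y, b x y = b y x) (φ ψ : X → ℝ) :
    ∑ x ∈ S, ∑ y ∈ S, b x y * φ y * (ψ x - ψ y)
      = ∑ x ∈ S, ∑ y ∈ S, -(b x y * φ x * (ψ x - ψ y)) := by
  rw [Finset.sum_comm]
  refine Finset.sum_congr rfl fun x _ => Finset.sum_congr rfl fun y _ => ?_
  rw [hb_symm y x]; ring

lemma sum_LS (hb_symm : ∀ x y, b x y = b y x) (φ ψ : X → ℝ) :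
    ∑ x ∈ S, φ x * (∑ y ∈ S, b x y * (ψ x - ψ y))
      = (1/2) * ∑ x ∈ S, ∑ y ∈ S, b x y * (φ x - φ y) * (ψ x - ψ y) := by
  have e1 : ∑ x ∈ S, ∑ y ∈ S, b x y * (φ x - φ y) * (ψ x - ψ y)
      = ∑ x ∈ S, ∑ y ∈ S, (b x y * φ x * (ψ x - ψ y) - b x y * φ y * (ψ x - ψ y)) := by
    refine Finset.sum_congr rfl fun x _ => Finset.sum_congr rfl fun y _ => by ring
  rw [e1]
  simp only [Finset.sum_sub_distrib]
  rw [hswap hb_symm φ ψ]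
  simp only [Finset.sum_neg_distrib]
  have e2 : ∑ x ∈ S, φ x * (∑ y ∈ S, b x y * (ψ x - ψ y))
      = ∑ x ∈ S, ∑ y ∈ S, b x y * φ x * (ψ x - ψ y) := by
    refine Finset.sum_congr rfl fun x _ => ?_
    rw [Finset.mul_sum]
    exact Finset.sum_congr rfl fun y _ => by ring
  rw [e2]
  ring

lemma BS_sym_eq (hb_symm : ∀ x y, b x y = b y x) (φ ψ : X → ℝ) :
    BS b c m w S φ ψ = (1/2) * ∑ x ∈ S, ∑ y ∈ S, b x y * (φ x - φ y) * (ψ x - ψ y)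
      + ∑ x ∈ S, PS b c m w S x * φ x * ψ x := by
  unfold BS LS
  have e1 : ∀ x ∈ S, φ x * ((∑ y ∈ S, b x y * (ψ x - ψ y)) + PS b c m w S x * ψ x)
      = φ x * (∑ y ∈ S, b x y * (ψ x - ψ y)) + PS b c m w S x * φ x * ψ x := by
    intro x _; ring
  rw [Finset.sum_congr rfl e1, Finset.sum_add_distrib, sum_LS hb_symm]

lemma BS_symm (hb_symm : ∀ x y, b x y = b y x) (φ ψ : X → ℝ) : BS b c m w S φ ψ = BS b c m w S ψ φ := by
  rw [BS_sym_eq hb_symm, BS_sym_eq hb_symm]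
  congr 1
  · congr 1
    refine Finset.sum_congr rfl fun x _ => Finset.sum_congr rfl fun y _ => by ring
  · refine Finset.sum_congr rfl fun x _ => by ring

lemma LS_add (u v : X → ℝ) (x : X) :
    LS b c m w S (fun z => u z + v z) x = LS b c m w S u x + LS b c m w S v x := by
  unfold LS
  beta_reduce
  have : ∀ y ∈ S, b x y * (u x + v x - (u y + v y))
      = b x y * (u x - u y) + b x y * (v x - v y) := fun y _ => by ring
  rw [Finset.sum_congr rfl this, Finset.sum_add_distrib]
  ring

lemma LS_smul (t : ℝ) (u : X → ℝ) (x : X) :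
    LS b c m w S (fun z => t * u z) x = t * LS b c m w S u x := by
  unfold LS
  beta_reduce
  have : ∀ y ∈ S, b x y * (t * u x - t * u y) = t * (b x y * (u x - u y)) := fun y _ => by ring
  rw [Finset.sum_congr rfl this, ← Finset.mul_sum]
  ring

lemma BS_add_left (f g h : X → ℝ) :
    BS b c m w S (fun z => f z + g z) h = BS b c m w S f h + BS b c m w S g h := by
  unfold BS
  rw [← Finset.sum_add_distrib]
  exact Finset.sum_congr rfl fun x _ => by ring

lemma BS_add_right (f g h : X → ℝ) :
    BS b c m w S f (fun z => g z + h z) = BS b c m w S f g + BS b c m w S f h := by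
  unfold BS
  rw [← Finset.sum_add_distrib]
  refine Finset.sum_congr rfl fun x _ => ?_
  rw [LS_add]; ring

lemma BS_smul_right (t : ℝ) (f g : X → ℝ) :
    BS b c m w S f (fun z => t * g z) = t * BS b c m w S f g := by
  unfold BS
  rw [Finset.mul_sum]
  refine Finset.sum_congr rfl fun x _ => ?_
  rw [LS_smul]; ring

lemma BS_delta (u : X → ℝ) {z : X} (hz : z ∈ S) :
    BS b c m w S (fun x => if x = z then (1:ℝ) else 0) u = LS b c m w S u z := by
  unfold BS
  rw [Finset.sum_eq_single z]
  · simp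
  · intro x _ hx; simp [hx]
  · intro h; exact absurd hz h

end FiniteAlg

lemma BS_smul_left {b : X → X → ℝ} {c m w : X → ℝ} {S : Finset X} (t : ℝ) (f g : X → ℝ) :
    BS b c m w S (fun z => t * f z) g = t * BS b c m w S f g := by
  unfold BS
  rw [Finset.mul_sum]
  exact Finset.sum_congr rfl fun x _ => by ring

lemma BS_expand {b : X → X → ℝ} {c m w : X → ℝ} {S : Finset X}
    (hb_symm : ∀ x y, b x y = b y x) (f g : X → ℝ) :
    BS b c m w S (fun x => f x + g x) (fun x => f x + g x)
      = BS b c m w S f f + 2 * BS b c m w S g f + BS b c m w S g g := by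
  rw [BS_add_left, BS_add_right f f g, BS_add_right g f g,
    BS_symm hb_symm f g]
  ring

lemma BS_expand_smul {b : X → X → ℝ} {c m w : X → ℝ} {S : Finset X}
    (hb_symm : ∀ x y, b x y = b y x) (f g : X → ℝ) (t : ℝ) :
    BS b c m w S (fun x => f x + t * g x) (fun x => f x + t * g x)
      = BS b c m w S f f + 2 * (BS b c m w S g f * t) + BS b c m w S g g * t ^ 2 := by
  have h1 : BS b c m w S (fun x => f x + t * g x) (fun x => f x + t * g x)
      = BS b c m w S f f + 2 * BS b c m w S (fun z => t * g z) f
        + BS b c m w S (fun z => t * g z) (fun z => t * g z) :=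
    BS_expand hb_symm f (fun z => t * g z)
  rw [h1, BS_smul_left, BS_smul_right, BS_smul_left]
  ring

lemma sq_abs_sub_le (a b : ℝ) : (|a| - |b|) ^ 2 ≤ (a - b) ^ 2 := by
  nlinarith [le_abs_self (a * b), abs_mul a b, sq_abs a, sq_abs b]

lemma exists_min {b : X → X → ℝ} {c m w : X → ℝ} {S : Finset X} {x0 : X}
    (hb_symm : ∀ x y, b x y = b y x) (hb0 : ∀ x y, 0 ≤ b x y)
    (hq : ∀ f : X → ℝ, (∀ x ∉ S, f x = 0) → 0 ≤ BS b c m w S f f)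
    (hx0 : x0 ∈ S) :
    ∃ u : X → ℝ, (∀ x ∉ S, u x = 0) ∧ u x0 = 1 ∧ (∀ x, 0 ≤ u x) ∧
      (∀ y ∈ S, y ≠ x0 → LS b c m w S u y = 0) ∧
      BS b c m w S u u ≤ BS b c m w S (fun x => if x = x0 then (1:ℝ) else 0)
        (fun x => if x = x0 then (1:ℝ) else 0) := by
  set dlt : X → ℝ := fun x => if x = x0 then (1:ℝ) else 0 with hdlt
  set S' : Finset X := S.erase x0 with hS'
  let ι := {x // x ∈ S'}
  let ext : (ι → ℝ) → X → ℝ := fun e x => if h : x ∈ S' then e ⟨x, h⟩ else 0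
  have hext_x0 : ∀ e, ext e x0 = 0 := fun e => dif_neg (Finset.notMem_erase x0 S)
  have hext_notS : ∀ e x, x ∉ S → ext e x = 0 := by
    intro e x hx
    exact dif_neg (fun hmem => hx (Finset.mem_of_mem_erase hmem))
  have hext_coe : ∀ (e : ι → ℝ) (i : ι), ext e ↑i = e i := by
    intro e i
    simp only [ext, i.2, dif_pos, Subtype.coe_eta]
  -- sum over S of (ext f) x * g x equals the Euclidean inner-type sum
  have hsum_ext : ∀ (f : ι → ℝ) (g : X → ℝ),
      ∑ x ∈ S, ext f x * g x = ∑ i : ι, f i * g ↑i := by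
    intro f g
    have h1 : ∑ x ∈ S, ext f x * g x = ∑ x ∈ S', ext f x * g x := by
      refine (Finset.sum_subset (Finset.erase_subset x0 S) fun x _ hx => ?_).symm
      have : ext f x = 0 := dif_neg hx
      rw [this, zero_mul]
    have h2 : ∑ x ∈ S', ext f x * g x = ∑ i : ι, ext f ↑i * g ↑i :=
      (Finset.sum_coe_sort S' (fun x => ext f x * g x)).symm
    rw [h1, h2]
    exact Finset.sum_congr rfl fun i _ => by rw [hext_coe]
  -- BS of ext-functions against arbitrary
  have hBS_ext : ∀ (f : ι → ℝ) (ψ : X → ℝ),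
      BS b c m w S (ext f) ψ = ∑ i : ι, f i * LS b c m w S ψ ↑i := by
    intro f ψ
    exact hsum_ext f (LS b c m w S ψ)
  -- the linear map
  let T : EuclideanSpace ℝ ι →ₗ[ℝ] EuclideanSpace ℝ ι :=
    { toFun := fun e => WithLp.toLp 2 (fun i => LS b c m w S (ext e) ↑i)
      map_add' := by
        intro e f
        ext i
        have hef : ext (e + f) = fun z => ext e z + ext f z := by
          funext x
          by_cases h : x ∈ S'
          · simp only [ext, dif_pos h]; rfl
          · simp only [ext, dif_neg h]; norm_num
        show LS b c m w S (ext (e + f)) ↑i = _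
        rw [hef, LS_add]
        rfl
      map_smul' := by
        intro t e
        ext i
        have hef : ext (t • e) = fun z => t * ext e z := by
          funext x
          by_cases h : x ∈ S'
          · simp only [ext, dif_pos h]; rfl
          · simp only [ext, dif_neg h]; norm_num
        show LS b c m w S (ext (t • e)) ↑i = _
        rw [hef, LS_smul]
        rfl }
  have hTapp : ∀ (e : EuclideanSpace ℝ ι) (i : ι), T e i = LS b c m w S (ext e) ↑i :=
    fun e i => rfl
  have hinner : ∀ (f e : EuclideanSpace ℝ ι),
      (inner ℝ f (T e) : ℝ) = BS b c m w S (ext f) (ext e) := by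
    intro f e
    rw [hBS_ext]
    rw [PiLp.inner_apply]
    exact Finset.sum_congr rfl fun i _ => by
      rw [RCLike.inner_apply, starRingEnd_apply, star_trivial, hTapp]; exact mul_comm _ _
  have hT : ∀ x y : EuclideanSpace ℝ ι, (inner ℝ (T x) y : ℝ) = (inner ℝ x (T y) : ℝ) := by
    intro x y
    rw [real_inner_comm, hinner, hinner, BS_symm hb_symm]
  let l : EuclideanSpace ℝ ι := WithLp.toLp 2 (fun i => LS b c m w S dlt ↑i)
  have hinner_l : ∀ e : EuclideanSpace ℝ ι, (inner ℝ l e : ℝ) = BS b c m w S dlt (ext e) := by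
    intro e
    rw [real_inner_comm, PiLp.inner_apply]
    rw [BS_symm hb_symm, hBS_ext]
    exact Finset.sum_congr rfl fun i _ => by
      rw [RCLike.inner_apply, starRingEnd_apply, star_trivial]; exact mul_comm _ _
  have hsupp_comb : ∀ (e : ι → ℝ) (x : X), x ∉ S → dlt x + ext e x = 0 := by
    intro e x hx
    have : x ≠ x0 := fun h => hx (h ▸ hx0)
    simp [hdlt, this, hext_notS e x hx]
  obtain ⟨e₀, he₀⟩ := psd_solve T hT l (BS b c m w S dlt dlt) (by
    intro e
    rw [hinner, hinner_l]
    have expand := BS_expand (c:=c) (m:=m) (w:=w) (S:=S) hb_symm dlt (ext e)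
    have hcr : BS b c m w S (ext e) dlt = BS b c m w S dlt (ext e) :=
      BS_symm hb_symm (ext e) dlt
    have h8 := hq _ (hsupp_comb e)
    rw [expand] at h8
    linarith)
  set u' : X → ℝ := fun x => dlt x + ext e₀ x with hu'
  have hu'_supp : ∀ x ∉ S, u' x = 0 := hsupp_comb e₀
  have hu'_x0 : u' x0 = 1 := by simp [hu', hdlt, hext_x0]
  have hEL' : ∀ y ∈ S, y ≠ x0 → LS b c m w S u' y = 0 := by
    intro y hy hyne
    have hyS' : y ∈ S' := Finset.mem_erase.mpr ⟨hyne, hy⟩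
    have h1 : LS b c m w S u' y = LS b c m w S dlt y + LS b c m w S (ext e₀) y := by
      rw [hu']; exact LS_add dlt (ext e₀) y
    have h2 : LS b c m w S (ext e₀) y = T e₀ ⟨y, hyS'⟩ := (hTapp e₀ ⟨y, hyS'⟩).symm
    have h3 : T e₀ ⟨y, hyS'⟩ = -(l ⟨y, hyS'⟩) := by rw [he₀]; rfl
    have h4 : l ⟨y, hyS'⟩ = LS b c m w S dlt y := rfl
    rw [h1, h2, h3, h4]; ring
  -- minimality of u'
  have hmin : ∀ f : X → ℝ, (∀ x ∉ S, f x = 0) → f x0 = 1 →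
      BS b c m w S u' u' ≤ BS b c m w S f f := by
    intro f hfs hfx0
    set d : X → ℝ := fun x => f x - u' x with hd
    have hdsupp : ∀ x ∉ S, d x = 0 := by
      intro x hx; simp [hd, hfs x hx, hu'_supp x hx]
    have hBS_d_u' : BS b c m w S d u' = 0 := by
      unfold BS
      refine Finset.sum_eq_zero fun x hx => ?_
      by_cases hxx0 : x = x0
      · have : d x = 0 := by simp [hd, hxx0, hfx0, hu'_x0]
        rw [this, zero_mul]
      · rw [hEL' x hx hxx0, mul_zero]
    have hfd : (fun x => u' x + d x) = f := by funext x; simp [hd]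
    have expand := BS_expand (c:=c) (m:=m) (w:=w) (S:=S) hb_symm u' d
    rw [hfd, hBS_d_u'] at expand
    have := hq d hdsupp
    linarith
  -- take absolute value
  set u : X → ℝ := fun x => |u' x| with hu
  have hu_supp : ∀ x ∉ S, u x = 0 := fun x hx => by simp [hu, hu'_supp x hx]
  have hu_x0 : u x0 = 1 := by simp [hu, hu'_x0]
  have habs_le : BS b c m w S u u ≤ BS b c m w S u' u' := by
    rw [BS_sym_eq hb_symm, BS_sym_eq hb_symm]
    have h1 : ∑ x ∈ S, ∑ y ∈ S, b x y * (u x - u y) * (u x - u y)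
        ≤ ∑ x ∈ S, ∑ y ∈ S, b x y * (u' x - u' y) * (u' x - u' y) := by
      refine Finset.sum_le_sum fun x _ => Finset.sum_le_sum fun y _ => ?_
      have h2 : (u x - u y) * (u x - u y) ≤ (u' x - u' y) * (u' x - u' y) := by
        have := sq_abs_sub_le (u' x) (u' y)
        simp only [hu]
        nlinarith [this]
      nlinarith [hb0 x y, h2, mul_le_mul_of_nonneg_left h2 (hb0 x y)]
    have h3 : ∑ x ∈ S, PS b c m w S x * u x * u x
        = ∑ x ∈ S, PS b c m w S x * u' x * u' x := by
      refine Finset.sum_congr rfl fun x _ => ?_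
      have : u x * u x = u' x * u' x := by
        simp only [hu]; exact abs_mul_abs_self (u' x)
      rw [mul_assoc, mul_assoc, this]
    linarith
  have hge : BS b c m w S u' u' ≤ BS b c m w S u u := hmin u hu_supp hu_x0
  have heq : BS b c m w S u u = BS b c m w S u' u' := le_antisymm habs_le hge
  -- second variation: BS d2 d2 = 0
  set d2 : X → ℝ := fun x => u x - u' x with hd2
  have hd2supp : ∀ x ∉ S, d2 x = 0 := by
    intro x hx; simp [hd2, hu_supp x hx, hu'_supp x hx]
  have hBS_d2_u' : BS b c m w S d2 u' = 0 := by
    unfold BS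
    refine Finset.sum_eq_zero fun x hx => ?_
    by_cases hxx0 : x = x0
    · have : d2 x = 0 := by simp [hd2, hxx0, hu_x0, hu'_x0]
      rw [this, zero_mul]
    · rw [hEL' x hx hxx0, mul_zero]
  have hd2zero : BS b c m w S d2 d2 = 0 := by
    have hud : (fun x => u' x + d2 x) = u := by funext x; simp [hd2]
    have expand := BS_expand (c:=c) (m:=m) (w:=w) (S:=S) hb_symm u' d2
    rw [hud, hBS_d2_u', heq] at expand
    linarith
  have hELu : ∀ y ∈ S, y ≠ x0 → LS b c m w S u y = 0 := by
    intro y hy hyne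
    have h1 : LS b c m w S u y = LS b c m w S d2 y := by
      have hud : (fun x => u' x + d2 x) = u := by funext x; simp [hd2]
      rw [← hud, LS_add, hEL' y hy hyne, zero_add]
    rw [h1]
    set δy : X → ℝ := fun x => if x = y then (1:ℝ) else 0 with hδy
    have key : BS b c m w S δy d2 = 0 := by
      refine quad_zero (hq δy ?_) ?_
      · intro x hx
        have : x ≠ y := fun h => hx (h ▸ hy)
        simp [hδy, this]
      · intro t
        have hsupp3 : ∀ x ∉ S, d2 x + t * δy x = 0 := by
          intro x hx
          have : x ≠ y := fun h => hx (h ▸ hy)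
          simp [hd2supp x hx, hδy, this]
        have h6 := hq (fun x => d2 x + t * δy x) hsupp3
        have expand := BS_expand_smul (c:=c) (m:=m) (w:=w) (S:=S) hb_symm d2 δy t
        rw [hd2zero] at expand
        rw [expand] at h6
        linarith
    rw [← BS_delta d2 hy, key]
  refine ⟨u, hu_supp, hu_x0, fun x => abs_nonneg (u' x), hELu, ?_⟩
  rw [heq]
  exact hmin dlt (fun x hx => by
    have : x ≠ x0 := fun h => hx (h ▸ hx0)
    simp [hdlt, this]) (by simp [hdlt])


section Analysis
variable {b : X → X → ℝ} {c m w : X → ℝ}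

lemma summable_b_mul (hbs : ∀ x, Summable (b x)) {u : X → ℝ} {S : Finset X}
    (hu : ∀ x ∉ S, u x = 0) (y : X) : Summable fun z => b y z * u z :=
  summable_of_ne_finset_zero (s := S) fun z hz => by rw [hu z hz, mul_zero]

lemma summable_pair (hb0 : ∀ x y, 0 ≤ b x y) (hb_symm : ∀ x y, b x y = b y x)
    (hbs : ∀ x, Summable (b x)) {φ : X → ℝ} {S : Finset X} (hφ : ∀ x ∉ S, φ x = 0) :
    Summable fun p : X × X => b p.1 p.2 * (φ p.1 - φ p.2) ^ 2 := by
  have h1 : Summable fun p : X × X => b p.1 p.2 * φ p.1 ^ 2 := by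
    have hnn : 0 ≤ (fun p : X × X => b p.1 p.2 * φ p.1 ^ 2) :=
      fun p => mul_nonneg (hb0 _ _) (sq_nonneg _)
    rw [summable_prod_of_nonneg hnn]
    constructor
    · intro x
      simpa using (hbs x).mul_right (φ x ^ 2)
    · have he : ∀ x : X, (∑' y, b x y * φ x ^ 2) = Dg b x * φ x ^ 2 := fun x => tsum_mul_right
      refine Summable.congr (f := fun x => Dg b x * φ x ^ 2) ?_ fun x => ?_
      · exact summable_of_ne_finset_zero (s := S) fun x hx => by rw [hφ x hx]; ring
      · simpa using (he x).symm
  have h2 : Summable fun p : X × X => b p.1 p.2 * φ p.2 ^ 2 := by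
    have hnn : 0 ≤ (fun p : X × X => b p.1 p.2 * φ p.2 ^ 2) :=
      fun p => mul_nonneg (hb0 _ _) (sq_nonneg _)
    rw [summable_prod_of_nonneg hnn]
    constructor
    · intro x
      refine summable_of_ne_finset_zero (s := S) fun y hy => ?_
      simp only
      rw [hφ y hy]
      ring
    · have he : ∀ x : X, (∑' y, b x y * φ y ^ 2) = ∑ y ∈ S, b x y * φ y ^ 2 :=
        fun x => tsum_eq_sum fun y hy => by rw [hφ y hy]; ring
      refine Summable.congr (f := fun x => ∑ y ∈ S, b x y * φ y ^ 2) ?_ fun x => ?_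
      · refine summable_sum fun y _ => ?_
        exact (((hbs y).congr fun x => hb_symm y x).mul_right _)
      · simpa using (he x).symm
  refine Summable.of_nonneg_of_le (fun p => mul_nonneg (hb0 _ _) (sq_nonneg _))
    (fun p => ?_) ((h1.mul_left 2).add (h2.mul_left 2))
  have := hb0 p.1 p.2
  nlinarith [sq_nonneg (φ p.1 + φ p.2)]

lemma summable_cpart {φ : X → ℝ} {S : Finset X} (hφ : ∀ x ∉ S, φ x = 0) :
    Summable fun x => c x * φ x ^ 2 :=
  summable_of_ne_finset_zero (s := S) fun x hx => by rw [hφ x hx]; ring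

lemma Qr_nonneg (hb0 : ∀ x y, 0 ≤ b x y) (hc0 : ∀ x, 0 ≤ c x) (φ : X → ℝ) :
    0 ≤ Qr b c φ := by
  unfold Qr
  have h1 : (0:ℝ) ≤ ∑' p : X × X, b p.1 p.2 * (φ p.1 - φ p.2) ^ 2 :=
    tsum_nonneg fun p => mul_nonneg (hb0 _ _) (sq_nonneg _)
  have h2 : (0:ℝ) ≤ ∑' x, c x * φ x ^ 2 :=
    tsum_nonneg fun x => mul_nonneg (hc0 _) (sq_nonneg _)
  linarith

lemma energy_eq (hb0 : ∀ x y, 0 ≤ b x y) (hb_symm : ∀ x y, b x y = b y x)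
    (hbs : ∀ x, Summable (b x)) (hc0 : ∀ x, 0 ≤ c x)
    {φ : X → ℝ} {S : Finset X} (hφ : ∀ x ∉ S, φ x = 0) :
    energy b c φ = ENNReal.ofReal (Qr b c φ) := by
  have hpair := summable_pair hb0 hb_symm hbs hφ
  have hcp : Summable fun x => c x * φ x ^ 2 := summable_cpart hφ
  have h1 : ∑' (x : X) (y : X), ENNReal.ofReal (b x y * (φ x - φ y) ^ 2)
      = ENNReal.ofReal (∑' p : X × X, b p.1 p.2 * (φ p.1 - φ p.2) ^ 2) := by
    rw [← ENNReal.tsum_prod (f := fun x y => ENNReal.ofReal (b x y * (φ x - φ y) ^ 2))]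
    rw [ENNReal.ofReal_tsum_of_nonneg (fun p => mul_nonneg (hb0 _ _) (sq_nonneg _)) hpair]
  have h2 : ∑' x, ENNReal.ofReal (c x * φ x ^ 2)
      = ENNReal.ofReal (∑' x, c x * φ x ^ 2) := by
    rw [ENNReal.ofReal_tsum_of_nonneg (fun x => mul_nonneg (hc0 _) (sq_nonneg _)) hcp]
  have hT0 : (0:ℝ) ≤ ∑' p : X × X, b p.1 p.2 * (φ p.1 - φ p.2) ^ 2 :=
    tsum_nonneg fun p => mul_nonneg (hb0 _ _) (sq_nonneg _)
  have hc0' : (0:ℝ) ≤ ∑' x, c x * φ x ^ 2 :=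
    tsum_nonneg fun x => mul_nonneg (hc0 _) (sq_nonneg _)
  have hhalf : (1/2 : ℝ≥0∞) = ENNReal.ofReal (1/2 : ℝ) := by
    norm_num [ENNReal.ofReal_div_of_pos, ENNReal.ofReal_one]
  unfold energy Qr
  rw [h1, h2, hhalf, ← ENNReal.ofReal_mul (by norm_num : (0:ℝ) ≤ 1/2),
    ← ENNReal.ofReal_add (by positivity) hc0']

lemma wsum_eq_sum {φ : X → ℝ} {S : Finset X} (hφ : ∀ x ∉ S, φ x = 0) :
    wsum m w φ = ∑ x ∈ S, m x * w x * φ x ^ 2 :=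
  tsum_eq_sum fun x hx => by rw [hφ x hx]; ring

lemma pair_decomp (hb0 : ∀ x y, 0 ≤ b x y) (hb_symm : ∀ x y, b x y = b y x)
    (hbs : ∀ x, Summable (b x)) {φ : X → ℝ} {S : Finset X} (hφ : ∀ x ∉ S, φ x = 0) :
    ∑' p : X × X, b p.1 p.2 * (φ p.1 - φ p.2) ^ 2
      = (∑ x ∈ S, ∑ y ∈ S, b x y * (φ x - φ y) ^ 2)
        + 2 * ∑ x ∈ S, (Dg b x - ∑ y ∈ S, b x y) * φ x ^ 2 := by
  set f : X × X → ℝ := fun p => b p.1 p.2 * (φ p.1 - φ p.2) ^ 2 with hf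
  have hf0 : ∀ p, 0 ≤ f p := fun p => mul_nonneg (hb0 _ _) (sq_nonneg _)
  have hfs : Summable f := summable_pair hb0 hb_symm hbs hφ
  set f1 : X × X → ℝ := fun p => if p.1 ∈ S ∧ p.2 ∈ S then f p else 0 with hf1
  set f2 : X × X → ℝ := fun p => if p.1 ∈ S ∧ p.2 ∉ S then f p else 0 with hf2
  set f3 : X × X → ℝ := fun p => if p.1 ∉ S ∧ p.2 ∈ S then f p else 0 with hf3
  have hpt : ∀ p, f p = f1 p + f2 p + f3 p := by
    intro p
    simp only [hf1, hf2, hf3]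
    by_cases h1 : p.1 ∈ S <;> by_cases h2 : p.2 ∈ S
    · simp [h1, h2]
    · simp [h1, h2]
    · simp [h1, h2]
    · simp only [h1, h2, false_and, and_false, if_false]
      have : f p = 0 := by
        simp only [hf]
        rw [hφ p.1 h1, hφ p.2 h2]
        ring
      rw [this]; ring
  have hs1 : Summable f1 := hfs.of_nonneg_of_le
    (fun p => by simp only [hf1]; split
                 · exact hf0 p
                 · exact le_rfl)
    (fun p => by simp only [hf1]; split
                 · exact le_rfl
                 · exact hf0 p)
  have hs2 : Summable f2 := hfs.of_nonneg_of_le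
    (fun p => by simp only [hf2]; split
                 · exact hf0 p
                 · exact le_rfl)
    (fun p => by simp only [hf2]; split
                 · exact le_rfl
                 · exact hf0 p)
  have hs3 : Summable f3 := hfs.of_nonneg_of_le
    (fun p => by simp only [hf3]; split
                 · exact hf0 p
                 · exact le_rfl)
    (fun p => by simp only [hf3]; split
                 · exact le_rfl
                 · exact hf0 p)
  have hsplit : ∑' p, f p = ∑' p, f1 p + ∑' p, f2 p + ∑' p, f3 p := by
    rw [← Summable.tsum_add hs1 hs2, ← Summable.tsum_add (hs1.add hs2) hs3]
    exact tsum_congr hpt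
  have e1 : ∑' p, f1 p = ∑ x ∈ S, ∑ y ∈ S, b x y * (φ x - φ y) ^ 2 := by
    have ha : ∑' p, f1 p = ∑ p ∈ S ×ˢ S, f1 p :=
      tsum_eq_sum fun p hp => by
        simp only [hf1]
        rw [if_neg]
        rwa [← Finset.mem_product]
    have hbb : ∑ p ∈ S ×ˢ S, f1 p = ∑ p ∈ S ×ˢ S, f p :=
      Finset.sum_congr rfl fun p hp => by
        simp only [hf1]
        rw [if_pos (Finset.mem_product.mp hp)]
    rw [ha, hbb, Finset.sum_product]
  have hmixed : ∑' p, f2 p = ∑ x ∈ S, (Dg b x - ∑ y ∈ S, b x y) * φ x ^ 2 := by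
    have hinner : ∀ x : X, Summable fun y => f2 (x, y) := by
      intro x
      refine (hfs.prod_factor x).of_nonneg_of_le
        (fun y => by simp only [hf2]; split
                     · exact hf0 _
                     · exact le_rfl)
        (fun y => by simp only [hf2]; split
                     · exact le_rfl
                     · exact hf0 _)
    rw [Summable.tsum_prod' hs2 hinner]
    have hx_eval : ∀ x : X, (∑' y, f2 (x, y))
        = if x ∈ S then (Dg b x - ∑ y ∈ S, b x y) * φ x ^ 2 else 0 := by
      intro x
      by_cases hx : x ∈ S
      · rw [if_pos hx]
        have hpt2 : ∀ y, f2 (x, y) = b x y * φ x ^ 2 - (if y ∈ S then b x y * φ x ^ 2 else 0) := by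
          intro y
          by_cases hy : y ∈ S
          · have hcond : ¬((x, y).1 ∈ S ∧ (x, y).2 ∉ S) := fun hcc => hcc.2 hy
            simp only [hf2]
            rw [if_neg hcond, if_pos hy]
            ring
          · have hcond : ((x, y).1 ∈ S ∧ (x, y).2 ∉ S) := ⟨hx, hy⟩
            simp only [hf2]
            rw [if_pos hcond, if_neg hy]
            have hfe : f (x, y) = b x y * (φ x - φ y) ^ 2 := rfl
            rw [hfe, hφ y hy]
            ring
        have hsa : Summable fun y => b x y * φ x ^ 2 := (hbs x).mul_right _
        have hsb : Summable fun y => (if y ∈ S then b x y * φ x ^ 2 else 0) :=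
          summable_of_ne_finset_zero (s := S) fun y hy => if_neg hy
        have ha : (∑' y, b x y * φ x ^ 2) = Dg b x * φ x ^ 2 := tsum_mul_right
        have hbb : (∑' y, (if y ∈ S then b x y * φ x ^ 2 else 0)) = ∑ y ∈ S, b x y * φ x ^ 2 := by
          rw [tsum_eq_sum (s := S) (fun y hy => if_neg hy)]
          exact Finset.sum_congr rfl fun y hy => if_pos hy
        rw [tsum_congr hpt2, Summable.tsum_sub hsa hsb, ha, hbb, ← Finset.sum_mul]
        ring
      · rw [if_neg hx]
        have : ∀ y, f2 (x, y) = 0 := fun y => by simp only [hf2, hx, false_and, if_false]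
        rw [tsum_congr this, tsum_zero]
    rw [tsum_congr hx_eval, tsum_eq_sum (s := S) (fun x hx => if_neg hx)]
    exact Finset.sum_congr rfl fun x hx => if_pos hx
  have e3 : ∑' p, f3 p = ∑' p, f2 p := by
    rw [← Equiv.tsum_eq (Equiv.prodComm X X) f3]
    refine tsum_congr fun p => ?_
    have hpc : (Equiv.prodComm X X) p = (p.2, p.1) := rfl
    rw [hpc]
    simp only [hf3, hf2, hf]
    by_cases h1 : p.1 ∈ S <;> by_cases h2 : p.2 ∈ S
    · simp [h1, h2]
    · simp only [h1, h2, not_false_iff, not_true, and_true, true_and, and_false, false_and,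
        if_true, if_false]
      rw [hb_symm p.2 p.1]
      ring
    · simp [h1, h2]
    · simp [h1, h2]
  rw [hsplit, e1, hmixed, e3, hmixed]
  ring

lemma Qr_eq_BS (hb0 : ∀ x y, 0 ≤ b x y) (hb_symm : ∀ x y, b x y = b y x)
    (hbs : ∀ x, Summable (b x)) {φ : X → ℝ} {S : Finset X} (hφ : ∀ x ∉ S, φ x = 0) :
    Qr b c φ - wsum m w φ = BS b c m w S φ φ := by
  rw [BS_sym_eq hb_symm]
  unfold Qr
  rw [pair_decomp hb0 hb_symm hbs hφ]
  rw [tsum_eq_sum (s := S) (fun x hx => by rw [hφ x hx]; ring)]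
  rw [wsum_eq_sum hφ]
  have h1 : ∑ x ∈ S, ∑ y ∈ S, b x y * (φ x - φ y) ^ 2
      = ∑ x ∈ S, ∑ y ∈ S, b x y * (φ x - φ y) * (φ x - φ y) :=
    Finset.sum_congr rfl fun x _ => Finset.sum_congr rfl fun y _ => by ring
  rw [h1]
  have h2 : ∑ x ∈ S, PS b c m w S x * φ x * φ x
      = ∑ x ∈ S, ((Dg b x - ∑ y ∈ S, b x y) * φ x ^ 2 + c x * φ x ^ 2 - m x * w x * φ x ^ 2) := by
    refine Finset.sum_congr rfl fun x _ => ?_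
    unfold PS
    ring
  rw [h2, Finset.sum_sub_distrib, Finset.sum_add_distrib]
  ring

lemma m_lap_eq (hm : ∀ x, 0 < m x) (hbs : ∀ x, Summable (b x))
    {u : X → ℝ} {S : Finset X} (hu : ∀ x ∉ S, u x = 0) (y : X) :
    m y * (lap b c m u y - w y * u y)
      = Dg b y * u y - (∑ z ∈ S, b y z * u z) + (c y - m y * w y) * u y := by
  have hpt : ∀ z, b y z * (u y - u z) = b y z * u y - b y z * u z := fun z => by ring
  have ha : (∑' z, b y z * u y) = Dg b y * u y := tsum_mul_right
  have hbb : (∑' z, b y z * u z) = ∑ z ∈ S, b y z * u z :=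
    tsum_eq_sum fun z hz => by rw [hu z hz, mul_zero]
  have h1 : ∑' z, b y z * (u y - u z) = Dg b y * u y - ∑ z ∈ S, b y z * u z := by
    rw [tsum_congr hpt, Summable.tsum_sub ((hbs y).mul_right _) (summable_b_mul hbs hu y), ha, hbb]
  unfold lap
  rw [h1]
  have := (hm y).ne'
  field_simp
  ring

lemma LS_eq_m_lap {u : X → ℝ} {S : Finset X} (hm : ∀ x, 0 < m x)
    (hbs : ∀ x, Summable (b x)) (hu : ∀ x ∉ S, u x = 0) (y : X) :
    LS b c m w S u y = m y * (lap b c m u y - w y * u y) := by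
  rw [m_lap_eq hm hbs hu y]
  unfold LS PS
  have h1 : ∑ z ∈ S, b y z * (u y - u z) = (∑ z ∈ S, b y z) * u y - ∑ z ∈ S, b y z * u z := by
    rw [Finset.sum_mul, ← Finset.sum_sub_distrib]
    exact Finset.sum_congr rfl fun z _ => by ring
  rw [h1]
  ring

lemma eq_at (hbs : ∀ x, Summable (b x)) {u : X → ℝ} {S : Finset X}
    (hu : ∀ x ∉ S, u x = 0) {y : X} (hLS : LS b c m w S u y = 0) :
    ∑' z, b y z * u z = coeffg b c m w y * u y := by
  have h1 : (∑' z, b y z * u z) = ∑ z ∈ S, b y z * u z :=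
    tsum_eq_sum fun z hz => by rw [hu z hz, mul_zero]
  unfold LS PS at hLS
  have h2 : ∑ z ∈ S, b y z * (u y - u z) = (∑ z ∈ S, b y z) * u y - ∑ z ∈ S, b y z * u z := by
    rw [Finset.sum_mul, ← Finset.sum_sub_distrib]
    exact Finset.sum_congr rfl fun z _ => by ring
  rw [h2] at hLS
  unfold coeffg
  rw [h1]
  linarith [hLS]

lemma eq_at_x0 (hbs : ∀ x, Summable (b x)) {u : X → ℝ} {S : Finset X} {x0 : X}
    (hx0 : x0 ∈ S) (hu : ∀ x ∉ S, u x = 0) (hux0 : u x0 = 1)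
    (hEL : ∀ y ∈ S, y ≠ x0 → LS b c m w S u y = 0) :
    ∑' z, b x0 z * u z = coeffg b c m w x0 - BS b c m w S u u := by
  have hBS : BS b c m w S u u = LS b c m w S u x0 := by
    unfold BS
    rw [Finset.sum_eq_single x0]
    · rw [hux0, one_mul]
    · intro y hy hyne
      rw [hEL y hy hyne, mul_zero]
    · intro h; exact absurd hx0 h
  have h1 : (∑' z, b x0 z * u z) = ∑ z ∈ S, b x0 z * u z :=
    tsum_eq_sum fun z hz => by rw [hu z hz, mul_zero]
  unfold LS PS at hBS
  have h2 : ∑ z ∈ S, b x0 z * (u x0 - u z) = (∑ z ∈ S, b x0 z) * u x0 - ∑ z ∈ S, b x0 z * u z := by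
    rw [Finset.sum_mul, ← Finset.sum_sub_distrib]
    exact Finset.sum_congr rfl fun z _ => by ring
  rw [h2, hux0] at hBS
  unfold coeffg
  rw [h1]
  linarith [hBS]

end Analysis

section Helpers

lemma summable_row_supported {F : X → X → ℝ} (S : Finset X)
    (hsupp : ∀ x ∉ S, ∀ y, F x y = 0) (hrow : ∀ x, Summable (F x)) :
    (Summable fun p : X × X => F p.1 p.2)
      ∧ ∑' p : X × X, F p.1 p.2 = ∑ x ∈ S, ∑' y, F x y := by
  classical
  have hsum : Summable fun p : X × X => F p.1 p.2 := by
    apply Summable.of_abs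
    have hnn : 0 ≤ (fun p : X × X => |F p.1 p.2|) := fun p => abs_nonneg _
    rw [summable_prod_of_nonneg hnn]
    constructor
    · intro x
      simpa using (hrow x).abs
    · refine summable_of_ne_finset_zero (s := S) fun x hx => ?_
      simp only
      rw [tsum_congr (fun y => by rw [hsupp x hx y, abs_zero]), tsum_zero]
  refine ⟨hsum, ?_⟩
  rw [Summable.tsum_prod' hsum (fun x => by simpa using hrow x)]
  exact tsum_eq_sum fun x hx => by
    rw [tsum_congr (fun y => hsupp x hx y), tsum_zero]

lemma tsum_swap {F : X → X → ℝ} :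
    ∑' p : X × X, F p.2 p.1 = ∑' p : X × X, F p.1 p.2 :=
  Equiv.tsum_eq (Equiv.prodComm X X) (fun p => F p.1 p.2)

lemma summable_swap {F : X → X → ℝ} (h : Summable fun p : X × X => F p.1 p.2) :
    Summable fun p : X × X => F p.2 p.1 :=
  (Equiv.prodComm X X).summable_iff.mpr h

end Helpers

section Analysis2
variable {b : X → X → ℝ} {c m w : X → ℝ}

lemma transform (hb0 : ∀ x y, 0 ≤ b x y) (hb_symm : ∀ x y, b x y = b y x)
    (hbs : ∀ x, Summable (b x)) (hm : ∀ x, 0 < m x)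
    {v : X → ℝ} (hv : ∀ x, 0 < v x) (hvF : ∀ x, Summable fun z => b x z * v z)
    {w' : X → ℝ} (hw' : ∀ x, lap b c m v x = w' x * v x)
    {φ : X → ℝ} {S : Finset X} (hφ : ∀ x ∉ S, φ x = 0) :
    wsum m w' φ ≤ Qr b c φ := by
  classical
  set G : X → X → ℝ :=
    fun x y => (φ x ^ 2 / v x) * (b x y * (v x - v y)) with hGdef
  have hGrow : ∀ x, Summable (G x) := by
    intro x
    apply Summable.mul_left
    exact (((hbs x).mul_right (v x)).sub (hvF x)).congr fun y => by ring
  have hGsupp : ∀ x ∉ S, ∀ y, G x y = 0 := by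
    intro x hx y
    simp only [hGdef]
    rw [hφ x hx]
    ring
  obtain ⟨hGsum, hGeval⟩ := summable_row_supported S hGsupp hGrow
  have hG'sum : Summable fun p : X × X => G p.2 p.1 := summable_swap hGsum
  have hpair := summable_pair hb0 hb_symm hbs hφ
  have hcp : Summable fun x => c x * φ x ^ 2 := summable_cpart hφ
  have hrow_eval : ∀ x ∈ S, ∑' y, G x y = m x * w' x * φ x ^ 2 - c x * φ x ^ 2 := by
    intro x _
    have h1 : ∑' y, G x y = (φ x ^ 2 / v x) * ∑' y, b x y * (v x - v y) := tsum_mul_left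
    have h2 : ∑' y, b x y * (v x - v y) = m x * lap b c m v x - c x * v x := by
      unfold lap
      have hmne := (hm x).ne'
      field_simp
      ring
    have h3 : lap b c m v x = w' x * v x := hw' x
    rw [h1, h2, h3]
    have hvne := (hv x).ne'
    field_simp
  have hGtot : ∑' p : X × X, G p.1 p.2 = wsum m w' φ - ∑' x, c x * φ x ^ 2 := by
    rw [hGeval, Finset.sum_congr rfl hrow_eval, Finset.sum_sub_distrib]
    rw [wsum_eq_sum (m := m) (w := w') hφ,
      tsum_eq_sum (s := S) (f := fun x => c x * φ x ^ 2)
        (fun x hx => by rw [hφ x hx]; ring)]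
  -- pointwise nonnegativity of the combination
  have hkey : ∀ p : X × X,
      0 ≤ b p.1 p.2 * (φ p.1 - φ p.2) ^ 2 - G p.1 p.2 - G p.2 p.1 := by
    intro p
    have hs := hv p.1
    have ht := hv p.2
    have hident : b p.1 p.2 * (φ p.1 - φ p.2) ^ 2 - G p.1 p.2 - G p.2 p.1
        = b p.1 p.2 * (v p.1 * v p.2 * (φ p.1 / v p.1 - φ p.2 / v p.2) ^ 2) := by
      simp only [hGdef]
      rw [hb_symm p.2 p.1]
      field_simp
      ring
    rw [hident]
    exact mul_nonneg (hb0 _ _)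
      (mul_nonneg (mul_nonneg hs.le ht.le) (sq_nonneg _))
  have hcomb : Summable fun p : X × X =>
      b p.1 p.2 * (φ p.1 - φ p.2) ^ 2 - G p.1 p.2 - G p.2 p.1 :=
    (hpair.sub hGsum).sub hG'sum
  have htot : 0 ≤ ∑' p : X × X,
      (b p.1 p.2 * (φ p.1 - φ p.2) ^ 2 - G p.1 p.2 - G p.2 p.1) :=
    tsum_nonneg hkey
  rw [Summable.tsum_sub (hpair.sub hGsum) hG'sum, Summable.tsum_sub hpair hGsum] at htot
  rw [tsum_swap (F := G), hGtot] at htot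
  unfold Qr
  linarith

-- the cutoff inequality
lemma cutoff (hb0 : ∀ x y, 0 ≤ b x y) (hb_symm : ∀ x y, b x y = b y x)
    (hbs : ∀ x, Summable (b x)) (hc0 : ∀ x, 0 ≤ c x)
    {φ : X → ℝ} {S : Finset X} (hφ : ∀ x ∉ S, φ x = 0) (K : Set X)
    {a : ℝ} (ha0 : 0 < a) (ha1 : a < 1) :
    (1 - a) * Qr b c (fun x => if x ∈ K then 0 else φ x)
      ≤ Qr b c φ + ((1-a)/a) * ∑ x ∈ S.filter (fun x => x ∈ K), Dg b x * φ x ^ 2 := by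
  classical
  set C : ℝ := (1-a)/a with hCdef
  have hC0 : 0 ≤ C := div_nonneg (by linarith) ha0.le
  have hCa : C * a = 1 - a := by
    rw [hCdef]
    field_simp
  set ψ : X → ℝ := fun x => if x ∈ K then 0 else φ x with hψdef
  have hψ : ∀ x ∉ S, ψ x = 0 := by
    intro x hx
    simp only [hψdef]
    rw [hφ x hx]
    split <;> rfl
  have hpairφ := summable_pair hb0 hb_symm hbs hφ
  have hpairψ := summable_pair hb0 hb_symm hbs hψ
  -- the scalar inequality
  have scal : ∀ pp qq : ℝ, (1-a) * qq^2 ≤ (pp-qq)^2 + C * pp^2 := by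
    intro pp qq
    have h1 : 0 ≤ a * ((pp-qq)^2 + C*pp^2 - (1-a)*qq^2) := by
      nlinarith [sq_nonneg (a*(pp-qq) + (1-a)*pp), hCa]
    have h2 := (mul_nonneg_iff_of_pos_left ha0).mp h1
    linarith
  have hscal : ∀ p : X × X, (1-a) * (b p.1 p.2 * (ψ p.1 - ψ p.2)^2)
      ≤ b p.1 p.2 * (φ p.1 - φ p.2)^2
        + C * (b p.1 p.2 * (if p.1 ∈ K then φ p.1^2 else 0)
               + b p.1 p.2 * (if p.2 ∈ K then φ p.2^2 else 0)) := by
    intro p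
    have hb := hb0 p.1 p.2
    by_cases h1 : p.1 ∈ K <;> by_cases h2 : p.2 ∈ K <;>
      simp only [hψdef, h1, h2, if_true, if_false]
    · nlinarith [mul_nonneg hb (sq_nonneg (φ p.1 - φ p.2)),
        mul_nonneg hb (sq_nonneg (φ p.1)), mul_nonneg hb (sq_nonneg (φ p.2)), hC0,
        mul_nonneg hC0 (mul_nonneg hb (sq_nonneg (φ p.1))),
        mul_nonneg hC0 (mul_nonneg hb (sq_nonneg (φ p.2)))]
    · have h := mul_le_mul_of_nonneg_left (scal (φ p.1) (φ p.2)) hb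
      nlinarith [h, mul_nonneg hC0 (mul_nonneg hb (sq_nonneg (φ p.2)))]
    · have h := mul_le_mul_of_nonneg_left (scal (φ p.2) (φ p.1)) hb
      nlinarith [h, mul_nonneg hC0 (mul_nonneg hb (sq_nonneg (φ p.1)))]
    · nlinarith [mul_nonneg hb (sq_nonneg (φ p.1 - φ p.2)), ha0]
  -- U sums
  set F1 : X → X → ℝ := fun x y => b x y * (if x ∈ K then φ x ^ 2 else 0) with hF1def
  have hF1row : ∀ x, Summable (F1 x) := fun x => (hbs x).mul_right _
  have hF1supp : ∀ x ∉ S, ∀ y, F1 x y = 0 := by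
    intro x hx y
    simp only [hF1def]
    rw [hφ x hx]
    split <;> ring
  obtain ⟨hU1sum, hU1eval⟩ := summable_row_supported S hF1supp hF1row
  have hU1 : ∑' p : X × X, F1 p.1 p.2
      = ∑ x ∈ S.filter (fun x => x ∈ K), Dg b x * φ x ^ 2 := by
    rw [hU1eval]
    have hrow : ∀ x ∈ S, (∑' y, F1 x y) = (if x ∈ K then Dg b x * φ x ^ 2 else 0) := by
      intro x _
      have : (∑' y, F1 x y) = Dg b x * (if x ∈ K then φ x ^ 2 else 0) := tsum_mul_right
      rw [this]
      split <;> ring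
    rw [Finset.sum_congr rfl hrow, Finset.sum_filter]
  have hF2sum : Summable fun p : X × X => b p.1 p.2 * (if p.2 ∈ K then φ p.2 ^ 2 else 0) := by
    have h := summable_swap (F := F1) hU1sum
    refine h.congr fun p => ?_
    simp only [hF1def]
    rw [hb_symm p.2 p.1]
  have hU2 : ∑' p : X × X, b p.1 p.2 * (if p.2 ∈ K then φ p.2 ^ 2 else 0)
      = ∑' p : X × X, F1 p.1 p.2 := by
    rw [← tsum_swap (F := F1)]
    refine tsum_congr fun p => ?_
    simp only [hF1def]
    rw [hb_symm p.2 p.1]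
  -- edge part
  have hedge : (1-a) * ∑' p : X × X, b p.1 p.2 * (ψ p.1 - ψ p.2)^2
      ≤ (∑' p : X × X, b p.1 p.2 * (φ p.1 - φ p.2)^2)
        + C * (∑' p : X × X, F1 p.1 p.2
               + ∑' p : X × X, b p.1 p.2 * (if p.2 ∈ K then φ p.2 ^ 2 else 0)) := by
    have hsum_rhs : Summable fun p : X × X => b p.1 p.2 * (φ p.1 - φ p.2)^2
        + C * (F1 p.1 p.2 + b p.1 p.2 * (if p.2 ∈ K then φ p.2 ^ 2 else 0)) :=
      hpairφ.add ((hU1sum.add hF2sum).mul_left C)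
    have h := Summable.tsum_le_tsum hscal (hpairψ.mul_left (1-a)) hsum_rhs
    rw [tsum_mul_left] at h
    rw [Summable.tsum_add hpairφ ((hU1sum.add hF2sum).mul_left C)] at h
    rw [tsum_mul_left, Summable.tsum_add hU1sum hF2sum] at h
    exact h
  -- c part
  have hcψ : Summable fun x => c x * ψ x ^ 2 := summable_cpart hψ
  have hcφ : Summable fun x => c x * φ x ^ 2 := summable_cpart hφ
  have hcpart : (1-a) * ∑' x, c x * ψ x ^ 2 ≤ ∑' x, c x * φ x ^ 2 := by
    rw [← tsum_mul_left]
    refine Summable.tsum_le_tsum (fun x => ?_) (hcψ.mul_left (1-a)) hcφ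
    by_cases hx : x ∈ K
    · simp only [hψdef, hx, if_true]
      nlinarith [mul_nonneg (hc0 x) (sq_nonneg (φ x))]
    · simp only [hψdef, hx, if_false]
      nlinarith [mul_nonneg (hc0 x) (sq_nonneg (φ x)), ha0]
  unfold Qr
  rw [hU2] at hedge
  rw [hU1] at hedge
  set U := ∑ x ∈ S.filter (fun x => x ∈ K), Dg b x * φ x ^ 2
  linarith
end Analysis2

set_option maxHeartbeats 1000000 in
/-- Proposition 3.3, optimality near infinity. A
null-critical Hardy type weight is optimal near infinity: for each `λ > 0` and
finite `K ⊆ X` there is `φ ∈ C_c(X)` supported in `X ∖ K` with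
`𝓠(φ) < ∑_{x ∈ X∖K} m(x)(w(x)+λ|w(x)|)φ(x)²`. -/
theorem stmt11 {X : Type*} [Countable X] (b : X → X → ℝ) (c m : X → ℝ)
    (hg : IsGraph b c m) (w : X → ℝ)
    (hcrit : IsCriticalHardyType b c m w)
    (hnull : ∀ v : X → ℝ, IsGroundState b c m w v →
      ¬ Summable fun x => m x * |w x| * v x ^ 2) :
    ∀ lam : ℝ, 0 < lam → ∀ K : Set X, K.Finite →
      ∃ φ : X → ℝ, FinSupp φ ∧ (∀ x ∈ K, φ x = 0) ∧
        (energy b c φ).toReal <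
          ∑' x, m x * (w x + lam * |w x|) * φ x ^ 2 := by
  classical
  obtain hb_symm := hg.symm
  obtain hb0 := hg.nonneg
  obtain hbs := hg.deg_summable
  obtain hc0 := hg.c_nonneg
  obtain hm := hg.m_pos
  -- handle empty X
  rcases isEmpty_or_nonempty X with hE | hNE
  · intro lam _ K _
    exfalso
    refine hnull (fun _ => 1) ⟨fun x => isEmptyElim x, fun x => isEmptyElim x,
      fun x => isEmptyElim x⟩ ?_
    exact summable_of_ne_finset_zero (s := (∅ : Finset X)) fun x _ => isEmptyElim x
  -- basic Hardy facts in real form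
  have hfin_of_supp : ∀ (φ : X → ℝ) (S : Finset X), (∀ x ∉ S, φ x = 0) → FinSupp φ := by
    intro φ S hφ
    exact Set.Finite.subset S.finite_toSet (Function.support_subset_iff'.mpr hφ)
  have hardy_real : ∀ (φ : X → ℝ) (S : Finset X), (∀ x ∉ S, φ x = 0) →
      wsum m w φ ≤ Qr b c φ := by
    intro φ S hφ
    have h1 := hcrit.1 φ (hfin_of_supp φ S hφ)
    rw [energy_eq hb0 hb_symm hbs hc0 hφ] at h1
    exact (ENNReal.ofReal_le_ofReal_iff (Qr_nonneg hb0 hc0 φ)).mp h1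
  have hqBS : ∀ (S : Finset X) (f : X → ℝ), (∀ x ∉ S, f x = 0) →
      0 ≤ BS b c m w S f f := by
    intro S f hf
    rw [← Qr_eq_BS hb0 hb_symm hbs hf]
    linarith [hardy_real f S hf]
  -- enumeration and paths
  set x0 : X := Classical.arbitrary X with hx0def
  obtain ⟨e, he⟩ := exists_surjective_nat X
  have hpath : ∀ i : ℕ, ∃ (kk : ℕ) (pp : ℕ → X), pp 0 = x0 ∧ pp kk = e i ∧
      ∀ j < kk, 0 < b (pp j) (pp (j + 1)) := fun i => hg.connected x0 (e i)
  choose k p hp0 hpk hpb using hpath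
  set Sn : ℕ → Finset X :=
    fun n => (Finset.range (n+1)).biUnion
      (fun i => (Finset.range (k i + 1)).image (p i)) with hSndef
  have hpathS : ∀ i j n, i ≤ n → j ≤ k i → p i j ∈ Sn n := by
    intro i j n hin hjk
    rw [hSndef]
    refine Finset.mem_biUnion.mpr ⟨i, Finset.mem_range.mpr (by omega), ?_⟩
    exact Finset.mem_image.mpr ⟨j, Finset.mem_range.mpr (by omega), rfl⟩
  have hx0S : ∀ n, x0 ∈ Sn n := by
    intro n
    have := hpathS 0 0 n (Nat.zero_le n) (Nat.zero_le _)
    rwa [hp0 0] at this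
  -- minimizers
  have hminex : ∀ n : ℕ, ∃ u : X → ℝ, (∀ x ∉ Sn n, u x = 0) ∧ u x0 = 1 ∧
      (∀ x, 0 ≤ u x) ∧ (∀ y ∈ Sn n, y ≠ x0 → LS b c m w (Sn n) u y = 0) ∧
      BS b c m w (Sn n) u u ≤ BS b c m w (Sn n) (fun x => if x = x0 then (1:ℝ) else 0)
        (fun x => if x = x0 then (1:ℝ) else 0) :=
    fun n => exists_min hb_symm hb0 (hqBS (Sn n)) (hx0S n)
  choose u hu_supp hu_x0 hu_nonneg hu_EL hu_min using hminex
  set dlt : X → ℝ := fun x => if x = x0 then (1:ℝ) else 0 with hdltdef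
  have hdlt_supp : ∀ n, ∀ x ∉ Sn n, dlt x = 0 := by
    intro n x hx
    rw [hdltdef]
    simp only
    rw [if_neg]
    intro hxx
    exact hx (hxx ▸ hx0S n)
  set E0 : ℝ := Qr b c dlt - wsum m w dlt with hE0def
  have hqn : ∀ n, Qr b c (u n) - wsum m w (u n) = BS b c m w (Sn n) (u n) (u n) :=
    fun n => Qr_eq_BS hb0 hb_symm hbs (hu_supp n)
  have hqn0 : ∀ n, 0 ≤ Qr b c (u n) - wsum m w (u n) := by
    intro n
    rw [hqn n]
    exact hqBS (Sn n) (u n) (hu_supp n)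
  have hE0bound : ∀ n, Qr b c (u n) - wsum m w (u n) ≤ E0 := by
    intro n
    rw [hqn n, hE0def, Qr_eq_BS hb0 hb_symm hbs (hdlt_supp n)]
    exact hu_min n
  -- equations
  have heqn : ∀ n, ∀ y ∈ Sn n, y ≠ x0 →
      ∑' z, b y z * u n z = coeffg b c m w y * u n y :=
    fun n y hy hne => eq_at hbs (hu_supp n) (hu_EL n y hy hne)
  have hx0bound : ∀ n, ∑' z, b x0 z * u n z ≤ coeffg b c m w x0 := by
    intro n
    rw [eq_at_x0 hbs (hx0S n) (hu_supp n) (hu_x0 n) (hu_EL n)]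
    have := hqn0 n
    rw [hqn n] at this
    linarith
  have htsum_nonneg : ∀ n y, 0 ≤ ∑' z, b y z * u n z :=
    fun n y => tsum_nonneg fun z => mul_nonneg (hb0 _ _) (hu_nonneg n z)
  have hterm_le : ∀ n y z', b y z' * u n z' ≤ ∑' z, b y z * u n z := by
    intro n y z'
    exact Summable.le_tsum (summable_b_mul hbs (hu_supp n) y) z'
      (fun z _ => mul_nonneg (hb0 _ _) (hu_nonneg n z))
  -- bounds along paths
  have hpathbound : ∀ i : ℕ, ∀ j, j ≤ k i → ∃ δ M : ℝ, 0 < δ ∧ 0 < M ∧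
      ∀ n ≥ i, δ ≤ u n (p i j) ∧ u n (p i j) ≤ M := by
    intro i j
    induction j with
    | zero =>
      intro _
      refine ⟨1, 1, one_pos, one_pos, fun n _ => ?_⟩
      rw [hp0 i]
      rw [hu_x0 n]
      exact ⟨le_rfl, le_rfl⟩
    | succ j ih =>
      intro hjk
      obtain ⟨δ, M, hδ, hM, hbd⟩ := ih (by omega)
      have hedge : 0 < b (p i j) (p i (j+1)) := hpb i j (by omega)
      set y := p i j
      set y' := p i (j + 1)
      -- uniform upper bound B on the row sums at y
      have hrowB : ∃ B : ℝ, 0 ≤ B ∧ ∀ n ≥ i, ∑' z, b y z * u n z ≤ B := by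
        by_cases hyx0 : y = x0
        · refine ⟨coeffg b c m w x0, ?_, fun n _ => by rw [hyx0]; exact hx0bound n⟩
          exact le_trans (htsum_nonneg 0 x0) (hx0bound 0)
        · have hcoeff0 : 0 ≤ coeffg b c m w y := by
            have h1 := heqn i y (hpathS i j i le_rfl (by omega)) hyx0
            have h2 := htsum_nonneg i y
            rw [h1] at h2
            have h3 := (hbd i le_rfl).1
            nlinarith
          refine ⟨coeffg b c m w y * M, mul_nonneg hcoeff0 hM.le, fun n hn => ?_⟩
          rw [heqn n y (hpathS i j n hn (by omega)) hyx0]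
          exact mul_le_mul_of_nonneg_left (hbd n hn).2 hcoeff0
      obtain ⟨B, hB0, hB⟩ := hrowB
      have hupper : ∀ n ≥ i, u n y' ≤ B / b y y' := by
        intro n hn
        have h1 : b y y' * u n y' ≤ B := le_trans (hterm_le n y y') (hB n hn)
        rw [le_div_iff₀ hedge]
        nlinarith [h1]
      by_cases hy'x0 : y' = x0
      · refine ⟨1, max (B / b y y') 1, one_pos, lt_of_lt_of_le one_pos (le_max_right _ _),
          fun n hn => ?_⟩
        rw [hy'x0, hu_x0 n]
        exact ⟨le_rfl, le_max_right _ _⟩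
      · -- lower bound via equation at y'
        have hy'S : ∀ n ≥ i, y' ∈ Sn n := fun n hn => hpathS i (j+1) n hn hjk
        have hkey : ∀ n ≥ i, coeffg b c m w y' * u n y' ≥ b y y' * δ := by
          intro n hn
          rw [← heqn n y' (hy'S n hn) hy'x0]
          calc b y y' * δ ≤ b y y' * u n y := by
                exact mul_le_mul_of_nonneg_left (hbd n hn).1 hedge.le
            _ = b y' y * u n y := by rw [hb_symm]
            _ ≤ ∑' z, b y' z * u n z := hterm_le n y' y
        have hcoeffpos : 0 < coeffg b c m w y' := by
          have h1 := hkey i le_rfl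
          have h2 : 0 < b y y' * δ := mul_pos hedge hδ
          nlinarith [hu_nonneg i y', hupper i le_rfl]
        refine ⟨(b y y' * δ) / coeffg b c m w y', max (B / b y y') 1,
          div_pos (mul_pos hedge hδ) hcoeffpos,
          lt_of_lt_of_le one_pos (le_max_right _ _), fun n hn => ?_⟩
        constructor
        · rw [div_le_iff₀ hcoeffpos]
          have := hkey n hn
          linarith [this]
        · exact le_trans (hupper n hn) (le_max_left _ _)
  -- global pointwise bounds
  have hglob : ∀ x : X, ∃ (N : ℕ) (δ M : ℝ), 0 < δ ∧ 0 < M ∧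
      ∀ n ≥ N, δ ≤ u n x ∧ u n x ≤ M := by
    intro x
    obtain ⟨i, rfl⟩ := he x
    obtain ⟨δ, M, hδ, hM, hbd⟩ := hpathbound i (k i) le_rfl
    refine ⟨i, δ, M, hδ, hM, fun n hn => ?_⟩
    rw [← hpk i]
    exact hbd n hn
  choose Nb δb Mb hδb hMb hbnd using hglob
  -- ultrafilter limit
  set 𝒰 : Ultrafilter ℕ := Ultrafilter.of atTop with h𝒰def
  have h𝒰 : ∀ {s : Set ℕ}, s ∈ (atTop : Filter ℕ) → s ∈ 𝒰 := by
    intro s hs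
    exact (Ultrafilter.of_le atTop) hs
  have hlim : ∀ x : X, ∃ r : ℝ, r ∈ Set.Icc (δb x) (Mb x) ∧
      Tendsto (fun n => u n x) 𝒰 (nhds r) := by
    intro x
    have hev : {n : ℕ | u n x ∈ Set.Icc (δb x) (Mb x)} ∈ 𝒰 := by
      refine h𝒰 (eventually_atTop.mpr ⟨Nb x, fun n hn => ?_⟩)
      exact ⟨(hbnd x n hn).1, (hbnd x n hn).2⟩
    obtain ⟨r, hr, hle⟩ := isCompact_Icc.ultrafilter_le_nhds
      (𝒰.map (fun n => u n x)) (by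
        rw [Ultrafilter.coe_map, Filter.le_principal_iff, Filter.mem_map]
        exact hev)
    exact ⟨r, hr, hle⟩
  choose v hv_mem hv_tend using hlim
  have hv_pos : ∀ x, 0 < v x := fun x => lt_of_lt_of_le (hδb x) (hv_mem x).1
  have hv_le : ∀ x, v x ≤ Mb x := fun x => (hv_mem x).2
  have hv_x0 : v x0 = 1 := by
    refine tendsto_nhds_unique (hv_tend x0) ?_
    have : (fun n => u n x0) = fun _ => (1:ℝ) := funext fun n => hu_x0 n
    rw [this]
    exact tendsto_const_nhds
  -- x is eventually in Sn n
  have hxev : ∀ x : X, ∀ᶠ n in (atTop : Filter ℕ), x ∈ Sn n := by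
    intro x
    obtain ⟨i, rfl⟩ := he x
    refine eventually_atTop.mpr ⟨i, fun n hn => ?_⟩
    rw [← hpk i]
    exact hpathS i (k i) n hn le_rfl
  -- partial row sums bound in the limit
  have hrowle : ∀ (x : X) (F : Finset X),
      ∑ z ∈ F, b x z * v z ≤ coeffg b c m w x * v x := by
    intro x F
    have T1 : Tendsto (fun n => ∑ z ∈ F, b x z * u n z) 𝒰
        (nhds (∑ z ∈ F, b x z * v z)) := by
      refine tendsto_finset_sum F fun z _ => ?_
      exact (hv_tend z).const_mul _
    have T2 : Tendsto (fun n => coeffg b c m w x * u n x) 𝒰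
        (nhds (coeffg b c m w x * v x)) := (hv_tend x).const_mul _
    refine le_of_tendsto_of_tendsto T1 T2 ?_
    have hev : ∀ᶠ n in (atTop : Filter ℕ),
        ∑ z ∈ F, b x z * u n z ≤ coeffg b c m w x * u n x := by
      filter_upwards [hxev x] with n hxSn
      have hsle : ∑ z ∈ F, b x z * u n z ≤ ∑' z, b x z * u n z :=
        Summable.sum_le_tsum F (fun z _ => mul_nonneg (hb0 _ _) (hu_nonneg n z))
          (summable_b_mul hbs (hu_supp n) x)
      by_cases hxx0 : x = x0
      · subst hxx0
        rw [hu_x0 n, mul_one]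
        exact le_trans hsle (hx0bound n)
      · rw [← heqn n x hxSn hxx0]
        exact hsle
    exact (h𝒰 hev : _)
  have hv_rowsum : ∀ x, (Summable fun z => b x z * v z)
      ∧ ∑' z, b x z * v z ≤ coeffg b c m w x * v x := by
    intro x
    exact summable_of_partial_bounded
      (fun z => mul_nonneg (hb0 _ _) (hv_pos z).le) _ (hrowle x)
  have hvMemF : MemF b v := by
    intro x
    refine (hv_rowsum x).1.congr fun z => ?_
    rw [abs_of_pos (hv_pos z)]
  -- supersolution property
  have hlapv : ∀ x, 0 ≤ lap b c m v x - w x * v x := by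
    intro x
    have h2 : ∑' z, b x z * (v x - v z) = Dg b x * v x - ∑' z, b x z * v z := by
      have hpt : ∀ z, b x z * (v x - v z) = b x z * v x - b x z * v z := fun z => by ring
      rw [tsum_congr hpt, Summable.tsum_sub ((hbs x).mul_right _) (hv_rowsum x).1, tsum_mul_right]
      rfl
    have h3 : m x * (lap b c m v x - w x * v x)
        = coeffg b c m w x * v x - ∑' z, b x z * v z := by
      unfold lap coeffg
      rw [h2]
      have := (hm x).ne'
      field_simp
      ring
    have h4 : 0 ≤ m x * (lap b c m v x - w x * v x) := by
      rw [h3]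
      linarith [(hv_rowsum x).2]
    exact (mul_nonneg_iff_of_pos_left (hm x)).mp h4
  -- ground state via criticality
  set w' : X → ℝ := fun x => w x + (lap b c m v x - w x * v x) / v x with hw'def
  have hw'ge : ∀ x, w x ≤ w' x := by
    intro x
    rw [hw'def]
    simp only
    have := div_nonneg (hlapv x) (hv_pos x).le
    linarith
  have hw'lap : ∀ x, lap b c m v x = w' x * v x := by
    intro x
    rw [hw'def]
    simp only
    have hvne := (hv_pos x).ne'
    field_simp
    ring
  have hw'Hardy : IsHardyType b c m w' := by
    intro φ hφ
    have hφS : ∀ x ∉ hφ.toFinset, φ x = 0 := by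
      intro x hx
      by_contra hne
      exact hx (hφ.mem_toFinset.mpr hne)
    rw [energy_eq hb0 hb_symm hbs hc0 hφS]
    exact ENNReal.ofReal_le_ofReal
      (transform hb0 hb_symm hbs hm hv_pos (fun x => (hv_rowsum x).1) hw'lap hφS)
  have hw'w : w' = w := hcrit.2 w' hw'Hardy hw'ge
  have hlapeq : ∀ x, lap b c m v x = w x * v x := by
    intro x
    have h1 := hw'lap x
    rw [hw'w] at h1
    exact h1
  have hGS : IsGroundState b c m w v := ⟨hvMemF, hv_pos, hlapeq⟩
  -- main contradiction setup
  by_contra hcon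
  push_neg at hcon
  obtain ⟨lam, hlam, K, hK, hstar⟩ := hcon
  -- constants
  set a : ℝ := lam / (2 * (1 + lam)) with hadef
  have ha0 : 0 < a := by
    rw [hadef]; positivity
  have ha1 : a < 1 := by
    rw [hadef, div_lt_one (by positivity)]
    linarith
  set C : ℝ := (1 - a) / a with hCdef
  have hC0 : 0 ≤ C := div_nonneg (by linarith) ha0.le
  have haid : ∀ x : X, (1-a) * (w x + lam * |w x|)
      = (w x + (lam/2) * |w x|) + a * (|w x| - w x) := by
    intro x
    rw [hadef]
    have h1 : (0:ℝ) < 2 * (1 + lam) := by positivity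
    field_simp
    ring
  set KF : Finset X := hK.toFinset with hKFdef
  have hKF : ∀ x, x ∈ KF ↔ x ∈ K := fun x => hK.mem_toFinset
  -- apply hstar to cutoffs of u n
  have hDg0 : ∀ x, 0 ≤ Dg b x := fun x => tsum_nonneg fun y => hb0 x y
  set NK : ℕ := KF.sup Nb with hNKdef
  set M1 : ℝ := ∑ x ∈ KF, (m x * |w x| + C * Dg b x) * Mb x ^ 2 with hM1def
  set M2 : ℝ := (2/lam) * (E0 + M1) with hM2def
  have hclaim : ∀ n ≥ NK,
      (lam/2) * ∑ x ∈ (Sn n).filter (fun x => ¬ x ∈ K), m x * |w x| * u n x ^ 2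
        ≤ E0 + M1 := by
    intro n hn
    set ψ : X → ℝ := fun x => if x ∈ K then 0 else u n x with hψdef
    have hψsupp : ∀ x ∉ Sn n, ψ x = 0 := by
      intro x hx
      rw [hψdef]
      simp only
      rw [hu_supp n x hx]
      split <;> rfl
    have hψK : ∀ x ∈ K, ψ x = 0 := by
      intro x hx
      rw [hψdef]
      simp only
      rw [if_pos hx]
    have hstar' := hstar ψ (hfin_of_supp ψ (Sn n) hψsupp) hψK
    rw [energy_eq hb0 hb_symm hbs hc0 hψsupp,
      ENNReal.toReal_ofReal (Qr_nonneg hb0 hc0 ψ)] at hstar'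
    -- identify the tsum with a finite sum over SNK
    set SNK : Finset X := (Sn n).filter (fun x => ¬ x ∈ K) with hSNKdef
    have hRHS : ∑' x, m x * (w x + lam * |w x|) * ψ x ^ 2
        = ∑ x ∈ SNK, m x * (w x + lam * |w x|) * u n x ^ 2 := by
      rw [tsum_eq_sum (s := SNK) (f := fun x => m x * (w x + lam * |w x|) * ψ x ^ 2) ?_]
      · refine Finset.sum_congr rfl fun x hx => ?_
        have hxK : ¬ x ∈ K := (Finset.mem_filter.mp hx).2
        rw [hψdef]
        simp only
        rw [if_neg hxK]
      · intro x hx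
        have hψ0 : ψ x = 0 := by
          by_cases hxS : x ∈ Sn n
          · by_cases hxK : x ∈ K
            · exact hψK x hxK
            · exact absurd (Finset.mem_filter.mpr ⟨hxS, hxK⟩) hx
          · exact hψsupp x hxS
        simp only [hψ0]
        ring
    rw [hRHS] at hstar'
    -- cutoff inequality
    have hcut := cutoff hb0 hb_symm hbs hc0 (hu_supp n) K ha0 ha1
    have hcutψ : Qr b c ψ = Qr b c (fun x => if x ∈ K then 0 else u n x) := by rw [hψdef]
    rw [← hcutψ, ← hCdef] at hcut
    -- combine: (1-a) * hstar' and hcut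
    have hcomb : (1-a) * ∑ x ∈ SNK, m x * (w x + lam * |w x|) * u n x ^ 2
        ≤ Qr b c (u n) + C * ∑ x ∈ (Sn n).filter (fun x => x ∈ K), Dg b x * u n x ^ 2 := by
      calc (1-a) * ∑ x ∈ SNK, m x * (w x + lam * |w x|) * u n x ^ 2
          ≤ (1-a) * Qr b c ψ := by
            apply mul_le_mul_of_nonneg_left hstar' (by linarith)
        _ ≤ _ := hcut
    -- pointwise lower bound for the lhs
    have hlower : (∑ x ∈ SNK, m x * w x * u n x ^ 2)
          + (lam/2) * ∑ x ∈ SNK, m x * |w x| * u n x ^ 2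
        ≤ (1-a) * ∑ x ∈ SNK, m x * (w x + lam * |w x|) * u n x ^ 2 := by
      rw [Finset.mul_sum, Finset.mul_sum, ← Finset.sum_add_distrib]
      refine Finset.sum_le_sum fun x _ => ?_
      have key2 : (1-a) * (m x * (w x + lam * |w x|) * u n x ^ 2)
          = m x * w x * u n x ^ 2 + (lam/2) * (m x * |w x| * u n x ^ 2)
            + (a * (|w x| - w x)) * (m x * u n x ^ 2) := by
        linear_combination (m x * u n x ^ 2) * (haid x)
      have h1 : 0 ≤ a * (|w x| - w x) := mul_nonneg ha0.le (by
        have := le_abs_self (w x); linarith)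
      have h2 : 0 ≤ m x := (hm x).le
      have h3 : 0 ≤ u n x ^ 2 := sq_nonneg _
      nlinarith [key2, mul_nonneg h1 (mul_nonneg h2 h3)]
    -- wsum split
    have hwsplit : wsum m w (u n)
        = ∑ x ∈ (Sn n).filter (fun x => x ∈ K), m x * w x * u n x ^ 2
          + ∑ x ∈ SNK, m x * w x * u n x ^ 2 := by
      rw [wsum_eq_sum (hu_supp n), hSNKdef]
      exact (Finset.sum_filter_add_sum_filter_not (Sn n) (fun x => x ∈ K) _).symm
    -- bound on the K part
    have hKpart : (∑ x ∈ (Sn n).filter (fun x => x ∈ K), m x * w x * u n x ^ 2)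
          + C * ∑ x ∈ (Sn n).filter (fun x => x ∈ K), Dg b x * u n x ^ 2 ≤ M1 := by
      rw [hM1def, Finset.mul_sum, ← Finset.sum_add_distrib]
      have step1 : ∑ x ∈ (Sn n).filter (fun x => x ∈ K),
            (m x * w x * u n x ^ 2 + C * (Dg b x * u n x ^ 2))
          ≤ ∑ x ∈ (Sn n).filter (fun x => x ∈ K), (m x * |w x| + C * Dg b x) * Mb x ^ 2 := by
        refine Finset.sum_le_sum fun x hx => ?_
        have hub : u n x ≤ Mb x := by
          refine (hbnd x n ?_).2
          calc Nb x ≤ KF.sup Nb := Finset.le_sup ((hKF x).mpr (Finset.mem_filter.mp hx).2)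
            _ ≤ n := hn
        have hsq : u n x ^ 2 ≤ Mb x ^ 2 := by
          have := hu_nonneg n x
          nlinarith
        have h1 : m x * w x * u n x ^ 2 ≤ m x * |w x| * Mb x ^ 2 := by
          have hmw : m x * w x ≤ m x * |w x| :=
            mul_le_mul_of_nonneg_left (le_abs_self _) (hm x).le
          have h0 : 0 ≤ m x * |w x| := mul_nonneg (hm x).le (abs_nonneg _)
          nlinarith [sq_nonneg (u n x), hsq, h0]
        have h2 : C * (Dg b x * u n x ^ 2) ≤ C * (Dg b x * Mb x ^ 2) := by
          apply mul_le_mul_of_nonneg_left _ hC0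
          exact mul_le_mul_of_nonneg_left hsq (hDg0 x)
        nlinarith [h1, h2]
      have step2 : ∑ x ∈ (Sn n).filter (fun x => x ∈ K), (m x * |w x| + C * Dg b x) * Mb x ^ 2
          ≤ ∑ x ∈ KF, (m x * |w x| + C * Dg b x) * Mb x ^ 2 := by
        refine Finset.sum_le_sum_of_subset_of_nonneg ?_ fun x _ _ => ?_
        · intro x hx
          rw [Finset.mem_filter] at hx
          exact (hKF x).mpr hx.2
        · have h1 : 0 ≤ m x * |w x| := mul_nonneg (hm x).le (abs_nonneg _)
          have h2 : 0 ≤ C * Dg b x := mul_nonneg hC0 (hDg0 x)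
          nlinarith [sq_nonneg (Mb x)]
      linarith
    have hfinal := hE0bound n
    rw [hwsplit] at hfinal
    linarith [hcomb, hlower, hKpart, hfinal]
  -- transfer the bound to arbitrary finite sets and pass to the limit
  have hterm0 : ∀ (n : ℕ) (x : X), 0 ≤ m x * |w x| * u n x ^ 2 :=
    fun n x => mul_nonneg (mul_nonneg (hm x).le (abs_nonneg _)) (sq_nonneg _)
  have hFn : ∀ (F : Finset X), ∀ n ≥ NK,
      ∑ x ∈ F.filter (fun x => ¬ x ∈ K), m x * |w x| * u n x ^ 2 ≤ M2 := by
    intro F n hn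
    have hM2' : ∑ x ∈ (Sn n).filter (fun x => ¬ x ∈ K), m x * |w x| * u n x ^ 2 ≤ M2 := by
      have h1 := hclaim n hn
      have h2 : (0:ℝ) < 2 / lam := by positivity
      rw [hM2def]
      calc ∑ x ∈ (Sn n).filter (fun x => ¬ x ∈ K), m x * |w x| * u n x ^ 2
          = (2/lam) * ((lam/2) * ∑ x ∈ (Sn n).filter (fun x => ¬ x ∈ K),
              m x * |w x| * u n x ^ 2) := by
            field_simp
        _ ≤ (2/lam) * (E0 + M1) := mul_le_mul_of_nonneg_left h1 h2.le
    calc ∑ x ∈ F.filter (fun x => ¬ x ∈ K), m x * |w x| * u n x ^ 2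
        = ∑ x ∈ (F.filter (fun x => ¬ x ∈ K)).filter (fun x => x ∈ Sn n),
            m x * |w x| * u n x ^ 2 := by
          refine (Finset.sum_subset (Finset.filter_subset _ _) ?_).symm
          intro x hx1 hx2
          have hxSn : ¬ x ∈ Sn n := fun hxSn => hx2 (Finset.mem_filter.mpr ⟨hx1, hxSn⟩)
          rw [hu_supp n x hxSn]
          ring
      _ ≤ ∑ x ∈ (Sn n).filter (fun x => ¬ x ∈ K), m x * |w x| * u n x ^ 2 := by
          refine Finset.sum_le_sum_of_subset_of_nonneg ?_ fun x _ _ => hterm0 n x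
          intro x hx
          rw [Finset.mem_filter] at hx ⊢
          have hx1 := Finset.mem_filter.mp hx.1
          exact ⟨hx.2, hx1.2⟩
      _ ≤ M2 := hM2'
  have hNKev : {n : ℕ | n ≥ NK} ∈ 𝒰 :=
    h𝒰 (eventually_atTop.mpr ⟨NK, fun n hn => hn⟩)
  have hlimF : ∀ F : Finset X,
      ∑ x ∈ F.filter (fun x => ¬ x ∈ K), m x * |w x| * v x ^ 2 ≤ M2 := by
    intro F
    have T1 : Tendsto (fun n => ∑ x ∈ F.filter (fun x => ¬ x ∈ K), m x * |w x| * u n x ^ 2)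
        𝒰 (nhds (∑ x ∈ F.filter (fun x => ¬ x ∈ K), m x * |w x| * v x ^ 2)) := by
      refine tendsto_finset_sum _ fun x _ => ?_
      exact ((hv_tend x).pow 2).const_mul _
    refine le_of_tendsto T1 ?_
    exact Filter.mem_of_superset hNKev (fun n hn => hFn F n hn)
  set M3 : ℝ := ∑ x ∈ KF, m x * |w x| * Mb x ^ 2 with hM3def
  have hM3 : ∀ F : Finset X,
      ∑ x ∈ F.filter (fun x => x ∈ K), m x * |w x| * v x ^ 2 ≤ M3 := by
    intro F
    have hs1 : ∑ x ∈ F.filter (fun x => x ∈ K), m x * |w x| * v x ^ 2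
        ≤ ∑ x ∈ F.filter (fun x => x ∈ K), m x * |w x| * Mb x ^ 2 := by
      refine Finset.sum_le_sum fun x _ => ?_
      have h1 : 0 ≤ m x * |w x| := mul_nonneg (hm x).le (abs_nonneg _)
      have h2 : v x ^ 2 ≤ Mb x ^ 2 := by
        nlinarith [hv_pos x, hv_le x]
      nlinarith [h1, h2]
    have hs2 : ∑ x ∈ F.filter (fun x => x ∈ K), m x * |w x| * Mb x ^ 2 ≤ M3 := by
      rw [hM3def]
      refine Finset.sum_le_sum_of_subset_of_nonneg ?_ fun x _ _ => ?_
      · intro x hx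
        exact (hKF x).mpr (Finset.mem_filter.mp hx).2
      · exact mul_nonneg (mul_nonneg (hm x).le (abs_nonneg _)) (sq_nonneg _)
    linarith
  have hpartial : ∀ F : Finset X, ∑ x ∈ F, m x * |w x| * v x ^ 2 ≤ M3 + M2 := by
    intro F
    rw [← Finset.sum_filter_add_sum_filter_not F (fun x => x ∈ K)
      (fun x => m x * |w x| * v x ^ 2)]
    have h1 := hM3 F
    have h2 := hlimF F
    linarith
  have hsummable : Summable fun x => m x * |w x| * v x ^ 2 :=
    (summable_of_partial_bounded
      (fun x => mul_nonneg (mul_nonneg (hm x).le (abs_nonneg _)) (sq_nonneg _))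
      (M3 + M2) hpartial).1
  exact hnull v hGS hsummable

end HG
end
end
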